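/- arXiv:1706.03589 — 8 statements merged into one kernel-verified Lean document; each statement's English description precedes it below -/
import Mathlib

section
/- Let n ≥ 6 and let L ⊆ ℤ^n be such that the translates l + S(n,e), l ∈ L, partition ℤ^n (i.e., L is a PL(n,e)-code). For a 6-dimensional sector T and an integer i, let t_{T,i} denote the number of l ∈ L with |(l + S(n,e)) ∩ T| = i. Then for every 6-dimensional sector T one has t_{T,1} − t_{T,7} − 10·t_{T,22} + 10·t_{T,42} + t_{T,57} − t_{T,63} ≥ 0. -/
/-- The Lee sphere `S(n,e) = {x ∈ ℤ^n : |x_1| + ⋯ + |x_n| ≤ e}`. -/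
def LeeSphere (n e : ℕ) : Set (Fin n → ℤ) :=
  {x | (∑ i, |x i|) ≤ (e : ℤ)}

/-- A `PL(n,e)`-code: every point of `ℤ^n` is within Lee distance `e` of exactly one
codeword; equivalently the translates `c + S(n,e)`, `c ∈ C`, partition `ℤ^n`. -/
def IsPLCode (n e : ℕ) (C : Set (Fin n → ℤ)) : Prop :=
  ∀ x : Fin n → ℤ, ∃! c, c ∈ C ∧ (∑ i, |x i - c i|) ≤ (e : ℤ)

/-- A `6`-dimensional sector in `ℤ^n`: a translate of
`{x : x_i ∈ {0,1} for i ∈ I, x_i = 0 otherwise}` for some `6`-element set `I` of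
coordinates. -/
def IsSector6 (n : ℕ) (T : Set (Fin n → ℤ)) : Prop :=
  ∃ (t : Fin n → ℤ) (I : Finset (Fin n)), I.card = 6 ∧
    T = {x | ∀ i, (i ∈ I → x i = t i ∨ x i = t i + 1) ∧ (i ∉ I → x i = t i)}

/-!
Identify the sector with the Boolean cube `I → Bool` via `sectorPoint`. The Lee distance from a
codeword `l` to the vertex `s` is the distance from `l` to its nearest vertex plus the Hamming
distance from `s` to that vertex, so `l + S(n,e)` meets the sector in a Hamming ball and the code
partitions the 6-cube into Hamming balls, of sizes `∑_{i ≤ r} C(6,i) ∈ {1,7,22,42,57,63,64}`.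
If `N_m` balls have size `m`, counting points gives `∑ m N_m = 64`, which turns the left-hand side
into `8 (8 - N_7 - 4 N_22 - 4 N_42 - 7 N_57 - 8 N_63 - 8 N_64)`. Packing bounds for radius-1 balls
in the 6-cube finish the proof: there are at most 8 of them, at most 3 disjoint from a radius-2
ball, and none disjoint from two disjoint radius-2 balls.
-/

open Finset Function

section HammingBall

variable {ι β : Type*} [Fintype ι] [DecidableEq ι] [DecidableEq β]

theorem hammingDist_update_le (x : ι → β) (j : ι) (b : β) :
    hammingDist (update x j b) x ≤ 1 := by
  refine (card_le_card fun i hi => ?_).trans (card_singleton j).le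
  by_contra hij
  simp only [mem_filter, mem_univ, true_and] at hi
  exact hi (update_of_ne (by simpa using hij) b x)

theorem hammingDist_update_add_one {x y : ι → β} {j : ι} (hj : x j ≠ y j) :
    hammingDist (update x j (y j)) y + 1 = hammingDist x y := by
  have : ({i | x i ≠ y i} : Finset ι) =
      insert j ({i | update x j (y j) i ≠ y i} : Finset ι) := by
    ext i
    by_cases hij : i = j
    · subst hij; simpa using hj
    · simp [hij]
  rw [hammingDist, hammingDist, this, card_insert_of_notMem (by simp)]

theorem exists_hammingDist_le_and_le {x y : ι → β} {r s : ℕ} (h : hammingDist x y ≤ r + s) :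
    ∃ z, hammingDist x z ≤ r ∧ hammingDist z y ≤ s := by
  induction r generalizing x with
  | zero => exact ⟨x, by simp, by simpa using h⟩
  | succ r ih =>
    by_cases hxy : x = y
    · exact ⟨x, by simp, by simp [hxy]⟩
    obtain ⟨j, hj⟩ := Function.ne_iff.1 hxy
    have hstep := hammingDist_update_add_one hj
    obtain ⟨z, hxz, hzy⟩ := ih (x := update x j (y j)) (by omega)
    refine ⟨z, (hammingDist_triangle x (update x j (y j)) z).trans ?_, hzy⟩
    have := (hammingDist_comm x _).trans_le (hammingDist_update_le x j (y j))
    omega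

variable [Fintype β]

def hammingBall (c : ι → β) (r : ℕ) : Finset (ι → β) :=
  {x | hammingDist x c ≤ r}

@[simp]
theorem mem_hammingBall {c x : ι → β} {r : ℕ} :
    x ∈ hammingBall c r ↔ hammingDist x c ≤ r := by
  simp [hammingBall]

theorem disjoint_hammingBall_iff {x y : ι → β} {r s : ℕ} :
    Disjoint (hammingBall x r) (hammingBall y s) ↔ r + s < hammingDist x y := by
  rw [← not_iff_not, not_disjoint_iff, not_lt]
  constructor
  · rintro ⟨z, hzx, hzy⟩
    rw [mem_hammingBall] at hzx hzy
    exact (hammingDist_triangle x z y).trans (by rw [hammingDist_comm]; omega)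
  · intro h
    obtain ⟨z, hxz, hzy⟩ := exists_hammingDist_le_and_le h
    exact ⟨z, by rwa [mem_hammingBall, hammingDist_comm], by rwa [mem_hammingBall]⟩

end HammingBall

section BooleanCube

variable {ι : Type*} [Fintype ι]

theorem hammingDist_add_hammingDist_compl (x c : ι → Bool) :
    hammingDist x c + hammingDist x cᶜ = Fintype.card ι := by
  rw [hammingDist, hammingDist, ← card_univ,
    ← card_filter_add_card_filter_not (s := univ) fun i => x i ≠ c i]
  congr 1
  exact congrArg card (filter_congr fun i _ => by cases x i <;> cases hc : c i <;> simp [hc])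

theorem hammingDist_add_hammingDist_add_hammingDist_le (x y z : ι → Bool) :
    hammingDist x y + hammingDist y z + hammingDist x z ≤
      2 * #{i | x i ≠ y i ∨ y i ≠ z i} := by
  simp only [hammingDist, card_filter, mul_sum, ← sum_add_distrib]
  refine sum_le_sum fun i _ => ?_
  cases x i <;> cases y i <;> cases z i <;> simp

variable [DecidableEq ι]

theorem card_filter_hammingDist_eq (c : ι → Bool) (i : ℕ) :
    #{x | hammingDist x c = i} = (Fintype.card ι).choose i := by
  rw [← card_univ, ← card_powersetCard]
  refine card_nbij' (fun x => ({j | x j ≠ c j} : Finset ι))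
    (fun S j => if j ∈ S then !c j else c j) ?_ ?_ ?_ ?_
  · intro x hx
    simpa [mem_powersetCard, hammingDist] using hx
  · intro S hS
    have : {j | (if j ∈ S then !c j else c j) ≠ c j} = S := by
      ext j; by_cases hj : j ∈ S <;> simp [hj]
    simp_all [hammingDist, mem_powersetCard]
  · intro x _
    funext j
    cases hx : x j <;> cases hc : c j <;> simp [hx, hc]
  · intro S _
    ext j
    by_cases hj : j ∈ S <;> simp [hj]

theorem card_hammingBall (c : ι → Bool) (r : ℕ) :
    #(hammingBall c r) = ∑ i ∈ range (r + 1), (Fintype.card ι).choose i := by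
  rw [card_eq_sum_card_fiberwise (f := fun x => hammingDist x c) (t := range (r + 1))
    fun x hx => mem_range_succ_iff.2 (mem_hammingBall.1 hx)]
  refine sum_congr rfl fun i hi => ?_
  rw [← card_filter_hammingDist_eq c i, hammingBall, filter_filter]
  exact congrArg card <| filter_congr fun x _ =>
    and_iff_right_of_imp fun h => h ▸ mem_range_succ_iff.1 hi

end BooleanCube

section SixCube

variable {ι α : Type*} [Fintype ι] [DecidableEq ι]

theorem card_hammingBall_of_card_eq_six (hι : Fintype.card ι = 6) (c : ι → Bool) (r : ℕ) :
    #(hammingBall c r) = [1, 7, 22, 42, 57, 63].getD r 64 := by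
  rcases lt_or_ge r 6 with hr | hr
  · rw [card_hammingBall, hι]
    interval_cases r <;> rfl
  · have : hammingBall c r = univ := eq_univ_of_forall fun x =>
      mem_hammingBall.2 (hammingDist_le_card_fintype.trans (hι ▸ hr))
    rw [this, card_univ, Fintype.card_fun, Fintype.card_bool, hι,
      List.getD_eq_default _ _ (by simpa using hr)]
    rfl

theorem eq_of_card_hammingBall_eq_getD (hι : Fintype.card ι = 6) {c : ι → Bool} {r j : ℕ}
    (hj : j < 6) (h : #(hammingBall c r) = [1, 7, 22, 42, 57, 63].getD j 64) : r = j := by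
  rw [card_hammingBall_of_card_eq_six hι] at h
  interval_cases j <;> rcases r with _ | _ | _ | _ | _ | _ | r <;> simp_all

theorem two_le_card_inter_hammingBall_one [Nonempty ι] {x y : ι → Bool}
    (h : hammingDist x y ≤ 2) : 2 ≤ #(hammingBall x 1 ∩ hammingBall y 1) := by
  rw [Nat.succ_le_iff, one_lt_card]
  by_cases hxy : x = y
  · subst hxy
    obtain ⟨j⟩ := ‹Nonempty ι›
    refine ⟨x, by simp, update x j (!x j), by simp [hammingDist_update_le], fun h => ?_⟩
    simpa using congrFun h j
  · obtain ⟨j, hj⟩ := Function.ne_iff.1 hxy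
    have hxj := hammingDist_update_add_one hj
    have hyj := hammingDist_update_add_one hj.symm
    rw [hammingDist_comm y] at hyj
    refine ⟨update x j (y j), ?_, update y j (x j), ?_, fun h => hj ?_⟩
    · simp only [mem_inter, mem_hammingBall, hammingDist_update_le, true_and]
      omega
    · simp only [mem_inter, mem_hammingBall, hammingDist_update_le, and_true]
      omega
    · simpa using (congrFun h j).symm

/-- `hammingBall cᶜ 1` consists of the seven points at distance at least 5 from `c`, and each
ball `hammingBall (x k) 1` contains two of them. -/
theorem card_le_three_of_pairwise (hι : Fintype.card ι = 6) {K : Finset α}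
    {x : α → ι → Bool} {c : ι → Bool} (hc : ∀ k ∈ K, 3 < hammingDist (x k) c)
    (hK : (K : Set α).Pairwise fun k k' => 2 < hammingDist (x k) (x k')) : #K ≤ 3 := by
  have : Nonempty ι := Fintype.card_pos_iff.1 (by omega)
  have hF : #(hammingBall cᶜ 1) = 7 := by rw [card_hammingBall_of_card_eq_six hι]; rfl
  have hdisj : (K : Set α).PairwiseDisjoint fun k => hammingBall (x k) 1 ∩ hammingBall cᶜ 1 :=
    fun k hk k' hk' hne => (disjoint_hammingBall_iff.2 (hK hk hk' hne)).mono
      inter_subset_left inter_subset_left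
  have hmeet : ∀ k ∈ K, 2 ≤ #(hammingBall (x k) 1 ∩ hammingBall cᶜ 1) := fun k hk =>
    two_le_card_inter_hammingBall_one <| by
      have := hammingDist_add_hammingDist_compl (x k) c
      have := hc k hk
      omega
  have hsub :
      K.biUnion (fun k => hammingBall (x k) 1 ∩ hammingBall cᶜ 1) ⊆ hammingBall cᶜ 1 :=
    biUnion_subset.2 fun k _ => inter_subset_right
  have := card_nsmul_le_sum K _ 2 hmeet
  rw [← card_biUnion hdisj, smul_eq_mul] at this
  have := card_le_card hsub
  omega

/-- Pigeonhole on two coordinates gives three centres agreeing there, whose pairwise distances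
then sum to at most `2 * 4 < 9`. -/
theorem card_le_eight_of_pairwise (hι : Fintype.card ι = 6) {K : Finset α}
    {x : α → ι → Bool}
    (hK : (K : Set α).Pairwise fun k k' => 2 < hammingDist (x k) (x k')) : #K ≤ 8 := by
  obtain ⟨j₁, j₂, hj⟩ := Fintype.one_lt_card_iff.1 (by omega : 1 < Fintype.card ι)
  by_contra! hK9
  obtain ⟨v, -, hv⟩ := exists_lt_card_fiber_of_mul_lt_card_of_maps_to
    (f := fun k => (x k j₁, x k j₂)) (t := univ) (n := 2) (fun _ _ => mem_univ _)
    (by simp; omega)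
  obtain ⟨a, ha, b, hb, c, hc, hab, hac, hbc⟩ := two_lt_card.1 hv
  simp only [mem_filter] at ha hb hc
  have hab' : x a j₁ = x b j₁ ∧ x a j₂ = x b j₂ := by simpa using ha.2.trans hb.2.symm
  have hbc' : x b j₁ = x c j₁ ∧ x b j₂ = x c j₂ := by simpa using hb.2.trans hc.2.symm
  have hsub : ({i | x a i ≠ x b i ∨ x b i ≠ x c i} : Finset ι) ⊆ univ \ {j₁, j₂} := by
    intro i
    simp only [mem_filter, mem_univ, true_and, mem_sdiff, mem_insert, mem_singleton]
    rintro (hi | hi) (rfl | rfl)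
    exacts [hi hab'.1, hi hab'.2, hi hbc'.1, hi hbc'.2]
  have := card_le_card hsub
  rw [card_univ_sdiff, card_pair hj] at this
  have := hammingDist_add_hammingDist_add_hammingDist_le (x a) (x b) (x c)
  have := hK ha.1 hb.1 hab
  have := hK hb.1 hc.1 hbc
  have := hK ha.1 hc.1 hac
  omega

end SixCube

section BallPartition

variable {ι α : Type*} [Fintype ι] [DecidableEq ι]
  (K : Finset α) (c : α → ι → Bool) (r : α → ℕ)

def numBallsOfCard (m : ℕ) : ℕ :=
  #{k ∈ K | #(hammingBall (c k) (r k)) = m}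

variable {K c r}

theorem sum_numBallsOfCard (hι : Fintype.card ι = 6)
    (hdisj : (K : Set α).PairwiseDisjoint fun k => hammingBall (c k) (r k))
    (hcov : ∀ x, ∃ k ∈ K, x ∈ hammingBall (c k) (r k)) :
    numBallsOfCard K c r 1 + 7 * numBallsOfCard K c r 7 + 22 * numBallsOfCard K c r 22
      + 42 * numBallsOfCard K c r 42 + 57 * numBallsOfCard K c r 57
      + 63 * numBallsOfCard K c r 63 + 64 * numBallsOfCard K c r 64 = 64 := by
  have hunion : K.biUnion (fun k => hammingBall (c k) (r k)) = univ :=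
    eq_univ_of_forall fun x => mem_biUnion.2 (hcov x)
  have htotal := card_biUnion hdisj
  rw [hunion, card_univ, Fintype.card_fun, Fintype.card_bool, hι] at htotal
  have hmaps :
      ∀ k ∈ K, #(hammingBall (c k) (r k)) ∈ ({1, 7, 22, 42, 57, 63, 64} : Finset ℕ) :=
    fun k _ => by
      rw [card_hammingBall_of_card_eq_six hι]
      rcases r k with _ | _ | _ | _ | _ | _ | _ <;> simp
  rw [← sum_fiberwise_of_maps_to hmaps] at htotal
  simp only [sum_const_nat fun k hk => (mem_filter.1 hk).2, mem_insert, mem_singleton,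
    OfNat.one_ne_ofNat, Nat.reduceEqDiff, or_self, not_false_eq_true, sum_insert,
    sum_singleton] at htotal
  unfold numBallsOfCard
  omega

theorem radius_eq_of_mem_filter_card (hι : Fintype.card ι = 6) {j : ℕ} {k : α}
    (hk : k ∈ K.filter fun k => #(hammingBall (c k) (r k)) = [1, 7, 22, 42, 57, 63].getD j 64)
    (hj : j < 6 := by norm_num) : k ∈ K ∧ r k = j :=
  ⟨(mem_filter.1 hk).1, eq_of_card_hammingBall_eq_getD hι hj (mem_filter.1 hk).2⟩

theorem numBallsOfCard_seven_le_eight (hι : Fintype.card ι = 6)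
    (hdisj : (K : Set α).PairwiseDisjoint fun k => hammingBall (c k) (r k)) :
    numBallsOfCard K c r 7 ≤ 8 :=
  card_le_eight_of_pairwise hι (x := c) fun k hk k' hk' hne => by
    obtain ⟨hkK, hrk⟩ := radius_eq_of_mem_filter_card (j := 1) hι hk
    obtain ⟨hkK', hrk'⟩ := radius_eq_of_mem_filter_card (j := 1) hι hk'
    have := disjoint_hammingBall_iff.1 (hdisj hkK hkK' hne)
    omega

theorem numBallsOfCard_seven_le_three (hι : Fintype.card ι = 6)
    (hdisj : (K : Set α).PairwiseDisjoint fun k => hammingBall (c k) (r k))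
    (h22 : 1 ≤ numBallsOfCard K c r 22) : numBallsOfCard K c r 7 ≤ 3 := by
  obtain ⟨k₀, hk₀⟩ := card_pos.1 h22
  obtain ⟨hk₀K, hrk₀⟩ := radius_eq_of_mem_filter_card (j := 2) hι hk₀
  refine card_le_three_of_pairwise hι (x := c) (c := c k₀) (fun k hk => ?_)
    fun k hk k' hk' hne => ?_
  · obtain ⟨hkK, hrk⟩ := radius_eq_of_mem_filter_card (j := 1) hι hk
    have := disjoint_hammingBall_iff.1 (hdisj hkK hk₀K (by rintro rfl; omega))
    omega
  · obtain ⟨hkK, hrk⟩ := radius_eq_of_mem_filter_card (j := 1) hι hk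
    obtain ⟨hkK', hrk'⟩ := radius_eq_of_mem_filter_card (j := 1) hι hk'
    have := disjoint_hammingBall_iff.1 (hdisj hkK hkK' hne)
    omega

theorem numBallsOfCard_seven_eq_zero (hι : Fintype.card ι = 6)
    (hdisj : (K : Set α).PairwiseDisjoint fun k => hammingBall (c k) (r k))
    (h22 : 2 ≤ numBallsOfCard K c r 22) : numBallsOfCard K c r 7 = 0 := by
  by_contra h7
  obtain ⟨k, hk⟩ := card_pos.1 (Nat.pos_of_ne_zero h7)
  obtain ⟨k₁, hk₁, k₂, hk₂, hne⟩ := one_lt_card.1 h22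
  obtain ⟨hkK, hrk⟩ := radius_eq_of_mem_filter_card (j := 1) hι hk
  obtain ⟨hk₁K, hrk₁⟩ := radius_eq_of_mem_filter_card (j := 2) hι hk₁
  obtain ⟨hk₂K, hrk₂⟩ := radius_eq_of_mem_filter_card (j := 2) hι hk₂
  have h₁₂ := disjoint_hammingBall_iff.1 (hdisj hk₁K hk₂K hne)
  have h₂ := disjoint_hammingBall_iff.1 (hdisj hk₂K hkK (by rintro rfl; omega))
  have h₁ := disjoint_hammingBall_iff.1 (hdisj hk₁K hkK (by rintro rfl; omega))
  have hsum := (hammingDist_add_hammingDist_add_hammingDist_le (c k₁) (c k₂) (c k)).trans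
    (Nat.mul_le_mul_left 2 (card_filter_le univ _))
  rw [card_univ, hι] at hsum
  omega

theorem post_inequality_of_ballPartition (hι : Fintype.card ι = 6)
    (hdisj : (K : Set α).PairwiseDisjoint fun k => hammingBall (c k) (r k))
    (hcov : ∀ x, ∃ k ∈ K, x ∈ hammingBall (c k) (r k)) :
    0 ≤ (numBallsOfCard K c r 1 : ℤ) - numBallsOfCard K c r 7 - 10 * numBallsOfCard K c r 22
      + 10 * numBallsOfCard K c r 42 + numBallsOfCard K c r 57 - numBallsOfCard K c r 63 := by
  have hsum := sum_numBallsOfCard hι hdisj hcov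
  have h8 := numBallsOfCard_seven_le_eight hι hdisj
  have h3 := numBallsOfCard_seven_le_three hι hdisj
  have h0 := numBallsOfCard_seven_eq_zero hι hdisj
  have : numBallsOfCard K c r 57 ≤ 1 := by omega
  have : numBallsOfCard K c r 63 ≤ 1 := by omega
  have : numBallsOfCard K c r 64 ≤ 1 := by omega
  interval_cases numBallsOfCard K c r 57 <;> interval_cases numBallsOfCard K c r 63 <;>
    interval_cases numBallsOfCard K c r 64 <;> omega

end BallPartition

def leeDist {n : ℕ} (x y : Fin n → ℤ) : ℤ := ∑ i, |x i - y i|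

section Sector

variable {n : ℕ} (t₀ : Fin n → ℤ) (I : Finset (Fin n))

def sectorPoint (s : I → Bool) : Fin n → ℤ :=
  fun i => t₀ i + if h : i ∈ I then ((s ⟨i, h⟩).toNat : ℤ) else 0

def nearestVertex (l : Fin n → ℤ) : I → Bool :=
  fun i => decide (t₀ i < l i)

def leeDistToSector (l : Fin n → ℤ) : ℤ :=
  leeDist (sectorPoint t₀ I (nearestVertex t₀ I l)) l

theorem setOf_sector_eq_range :
    {x | ∀ i, (i ∈ I → x i = t₀ i ∨ x i = t₀ i + 1) ∧ (i ∉ I → x i = t₀ i)} =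
      Set.range (sectorPoint t₀ I) := by
  ext x
  constructor
  · intro hx
    refine ⟨fun i => decide (x i = t₀ i + 1), funext fun i => ?_⟩
    by_cases h : i ∈ I
    · rcases (hx i).1 h with h1 | h1 <;> simp [sectorPoint, h, h1]
    · simp [sectorPoint, h, (hx i).2 h]
  · rintro ⟨s, rfl⟩ i
    by_cases h : i ∈ I
    · cases s ⟨i, h⟩ <;> simp [sectorPoint, h]
    · simp [sectorPoint, h]

theorem sectorPoint_injective : Injective (sectorPoint t₀ I) := fun s s' h => funext fun i => by
  have := congrFun h i
  cases hs : s i <;> cases hs' : s' i <;> simp_all [sectorPoint]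

theorem abs_sectorPoint_sub (s : I → Bool) (l : Fin n → ℤ) (i : Fin n) :
    |sectorPoint t₀ I s i - l i| = |sectorPoint t₀ I (nearestVertex t₀ I l) i - l i|
      + if h : i ∈ I then (if s ⟨i, h⟩ ≠ nearestVertex t₀ I l ⟨i, h⟩ then 1 else 0)
        else 0 := by
  by_cases h : i ∈ I
  · simp only [sectorPoint, nearestVertex, dif_pos h]
    rcases lt_or_ge (t₀ i) (l i) with hl | hl <;> cases s ⟨i, h⟩ <;>
      simp [hl, not_lt.2, abs_eq_max_neg] <;> omega
  · simp [sectorPoint, h]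

theorem leeDist_sectorPoint (s : I → Bool) (l : Fin n → ℤ) :
    leeDist (sectorPoint t₀ I s) l =
      leeDistToSector t₀ I l + hammingDist s (nearestVertex t₀ I l) := by
  rw [leeDist, sum_congr rfl fun i _ => abs_sectorPoint_sub t₀ I s l i, sum_add_distrib,
    ← sum_attach_eq_sum_dite I fun i => if s i ≠ nearestVertex t₀ I l i then (1 : ℤ) else 0,
    ← univ_eq_attach, hammingDist, card_filter]
  push_cast
  rfl

def sectorRadius (e : ℤ) (l : Fin n → ℤ) : ℕ :=
  (e - leeDistToSector t₀ I l).toNat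

variable {t₀ I}

theorem leeDist_sectorPoint_le_iff {e : ℤ} {s : I → Bool} {l : Fin n → ℤ} :
    leeDist (sectorPoint t₀ I s) l ≤ e ↔ leeDistToSector t₀ I l ≤ e ∧
      s ∈ hammingBall (nearestVertex t₀ I l) (sectorRadius t₀ I e l) := by
  rw [leeDist_sectorPoint, mem_hammingBall, sectorRadius]
  omega

theorem mem_image_add_leeSphere {e : ℕ} {l x : Fin n → ℤ} :
    x ∈ (fun v => l + v) '' LeeSphere n e ↔ leeDist x l ≤ e := by
  constructor
  · rintro ⟨v, hv, rfl⟩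
    simpa [leeDist, LeeSphere] using hv
  · intro h
    exact ⟨x - l, by simpa [LeeSphere, leeDist] using h, by simp⟩

theorem ncard_image_add_leeSphere_inter_range_sectorPoint (e : ℕ) (l : Fin n → ℤ) :
    ((fun v => l + v) '' LeeSphere n e ∩ Set.range (sectorPoint t₀ I)).ncard =
      if leeDistToSector t₀ I l ≤ e then
        #(hammingBall (nearestVertex t₀ I l) (sectorRadius t₀ I e l)) else 0 := by
  have : (fun v => l + v) '' LeeSphere n e ∩ Set.range (sectorPoint t₀ I) =
      sectorPoint t₀ I '' {s | leeDist (sectorPoint t₀ I s) l ≤ e} := by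
    ext x
    rw [Set.mem_inter_iff, mem_image_add_leeSphere]
    constructor
    · rintro ⟨hx, s, rfl⟩
      exact ⟨s, hx, rfl⟩
    · rintro ⟨s, hs, rfl⟩
      exact ⟨hs, s, rfl⟩
  rw [this, Set.ncard_image_of_injective _ (sectorPoint_injective t₀ I)]
  split_ifs with h
  · rw [← Set.ncard_coe_finset]
    congr 1
    ext s
    simp [leeDist_sectorPoint_le_iff, h]
  · simp [leeDist_sectorPoint_le_iff, h]

end Sector

namespace IsPLCode

variable {n e : ℕ} {L : Set (Fin n → ℤ)} (hL : IsPLCode n e L)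
  (t₀ : Fin n → ℤ) (I : Finset (Fin n))
include hL

theorem finite_setOf_leeDistToSector_le : {l ∈ L | leeDistToSector t₀ I l ≤ e}.Finite := by
  choose g hg using fun s => (hL (sectorPoint t₀ I s)).exists
  exact (Set.finite_range g).subset fun l hl =>
    ⟨nearestVertex t₀ I l, (hL _).unique (hg _) hl⟩

theorem pairwiseDisjoint_sectorBall : {l ∈ L | leeDistToSector t₀ I l ≤ e}.PairwiseDisjoint
    fun l => hammingBall (nearestVertex t₀ I l) (sectorRadius t₀ I e l) := by
  intro l ⟨hlL, hl⟩ l' ⟨hl'L, hl'⟩ hne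
  refine disjoint_left.2 fun s hs hs' => hne ((hL (sectorPoint t₀ I s)).unique ?_ ?_)
  · exact ⟨hlL, leeDist_sectorPoint_le_iff.2 ⟨hl, hs⟩⟩
  · exact ⟨hl'L, leeDist_sectorPoint_le_iff.2 ⟨hl', hs'⟩⟩

theorem exists_mem_sectorBall (s : I → Bool) :
    ∃ l ∈ {l ∈ L | leeDistToSector t₀ I l ≤ e},
      s ∈ hammingBall (nearestVertex t₀ I l) (sectorRadius t₀ I e l) := by
  obtain ⟨l, hlL, hl⟩ := (hL (sectorPoint t₀ I s)).exists
  obtain ⟨hle, hs⟩ := leeDist_sectorPoint_le_iff.1 hl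
  exact ⟨l, ⟨hlL, hle⟩, hs⟩

theorem ncard_setOf_ncard_inter_eq_numBallsOfCard {m : ℕ} (hm : m ≠ 0) :
    {l ∈ L |
      ((fun v => l + v) '' LeeSphere n e ∩ Set.range (sectorPoint t₀ I)).ncard = m}.ncard =
      numBallsOfCard (hL.finite_setOf_leeDistToSector_le t₀ I).toFinset (nearestVertex t₀ I)
        (sectorRadius t₀ I e) m := by
  rw [numBallsOfCard, ← Set.ncard_coe_finset]
  congr 1
  ext l
  simp only [ncard_image_add_leeSphere_inter_range_sectorPoint, Set.mem_ofPred_eq, coe_filter,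
    Set.Finite.mem_toFinset]
  split_ifs with h <;> simp [h, hm.symm]

end IsPLCode

theorem post_sector_inequality_general (n e : ℕ) (L : Set (Fin n → ℤ))
    (hL : IsPLCode n e L) (T : Set (Fin n → ℤ)) (hT : IsSector6 n T)
    (t : ℕ → ℕ)
    (ht : ∀ i, t i = {l ∈ L | (((fun v => l + v) '' LeeSphere n e) ∩ T).ncard = i}.ncard) :
    0 ≤ (t 1 : ℤ) - t 7 - 10 * t 22 + 10 * t 42 + t 57 - t 63 := by
  obtain ⟨t₀, I, hI, rfl⟩ := hT
  have hcount : ∀ m ≠ 0, t m =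
      numBallsOfCard (hL.finite_setOf_leeDistToSector_le t₀ I).toFinset (nearestVertex t₀ I)
        (sectorRadius t₀ I e) m := fun m hm => by
    rw [ht, setOf_sector_eq_range, hL.ncard_setOf_ncard_inter_eq_numBallsOfCard t₀ I hm]
  rw [hcount 1 one_ne_zero, hcount 7 (by norm_num), hcount 22 (by norm_num),
    hcount 42 (by norm_num), hcount 57 (by norm_num), hcount 63 (by norm_num)]
  refine post_inequality_of_ballPartition (by simpa using hI) ?_ fun s => ?_
  · exact (hL.pairwiseDisjoint_sectorBall t₀ I).subset (by simp)
  · obtain ⟨l, hl, hs⟩ := hL.exists_mem_sectorBall t₀ I s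
    exact ⟨l, by simpa using hl, hs⟩

/-- Post's inequality: for a tiling of `ℤ^n` (`n ≥ 6`) by Lee spheres `S(n,e)` and any
`6`-dimensional sector `T`, with `t i` the number of codewords `l` whose translated sphere
meets `T` in exactly `i` points, one has
`t 1 − t 7 − 10 t 22 + 10 t 42 + t 57 − t 63 ≥ 0`. -/
theorem post_sector_inequality (n e : ℕ) (hn : 6 ≤ n) (L : Set (Fin n → ℤ))
    (hL : IsPLCode n e L) (T : Set (Fin n → ℤ)) (hT : IsSector6 n T)
    (t : ℕ → ℕ)
    (ht : ∀ i, t i = {l ∈ L | (((fun v => l + v) '' LeeSphere n e) ∩ T).ncard = i}.ncard) :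
    0 ≤ (t 1 : ℤ) - t 7 - 10 * t 22 + 10 * t 42 + t 57 - t 63 :=
  post_sector_inequality_general n e L hL T hT t ht
end

section
/- Let C be a PL(n,e)-code with e ≥ 2, and let s ≥ 1 be an integer. Then there exists a ∈ ℤ^n such that |(a + Λ(e,s)) ∩ C| ≥ |Λ(e,s)| / (|S(n,e)| − |S(n,e−2)|). -/
/-- `Λ(e,s) = {x ∈ ℤ^n : |x_1| + ⋯ + |x_n| = e + 2, −s < x_i ≤ s for all i}`. -/
def Lambda (n e s : ℕ) : Set (Fin n → ℤ) :=
  {x | (∑ i, |x i|) = (e : ℤ) + 2 ∧ ∀ i, -(s : ℤ) < x i ∧ x i ≤ (s : ℤ)}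

open Finset

variable {n : ℕ}

def leeWeight (x : Fin n → ℤ) : ℤ := ∑ i, |x i|

@[simp]
theorem leeWeight_zero : leeWeight (0 : Fin n → ℤ) = 0 := by
  simp [leeWeight]

@[simp]
theorem leeWeight_neg (x : Fin n → ℤ) : leeWeight (-x) = leeWeight x := by
  simp [leeWeight]

theorem leeWeight_sub_comm (x y : Fin n → ℤ) : leeWeight (x - y) = leeWeight (y - x) := by
  rw [← neg_sub, leeWeight_neg]

theorem leeWeight_add_le (x y : Fin n → ℤ) :
    leeWeight (x + y) ≤ leeWeight x + leeWeight y := by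
  rw [leeWeight, leeWeight, leeWeight, ← sum_add_distrib]
  exact sum_le_sum fun i _ => abs_add_le _ _

theorem abs_le_leeWeight (x : Fin n → ℤ) (i : Fin n) : |x i| ≤ leeWeight x :=
  single_le_sum (f := fun i => |x i|) (fun _ _ => abs_nonneg _) (mem_univ i)

theorem Int.abs_sub_sign {a : ℤ} (ha : a ≠ 0) : |a - a.sign| = |a| - 1 := by
  rcases ha.lt_or_gt with ha | ha
  · rw [Int.sign_eq_neg_one_of_neg ha, abs_of_neg ha, abs_of_nonpos (by omega : a - -1 ≤ 0)]
    ring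
  · rw [Int.sign_eq_one_of_pos ha, abs_of_pos ha, abs_of_nonneg (by omega : 0 ≤ a - 1)]

theorem exists_leeWeight_eq_one_and_leeWeight_sub_eq {x : Fin n → ℤ} (hx : x ≠ 0) :
    ∃ u, leeWeight u = 1 ∧ leeWeight (x - u) = leeWeight x - 1 := by
  obtain ⟨i, hi⟩ := Function.ne_iff.1 hx
  refine ⟨Pi.single i (x i).sign, ?_, ?_⟩
  · simp [leeWeight, Pi.single_apply, apply_ite (abs : ℤ → ℤ), Int.abs_sign_of_ne_zero hi]
  have hcoord : ∀ j, |(x - Pi.single i (x i).sign : Fin n → ℤ) j| =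
      |x j| - if j = i then 1 else 0 := by
    intro j
    rcases eq_or_ne j i with rfl | hj
    · simpa using Int.abs_sub_sign hi
    · simp [hj]
  simp only [leeWeight, hcoord, sum_sub_distrib, sum_ite_eq', mem_univ, if_true]

/-- The Lee metric on `ℤ^n` is geodesic. -/
theorem exists_leeWeight_le_and_leeWeight_sub_le {x : Fin n → ℤ} {j k : ℕ}
    (h : leeWeight x ≤ j + k) : ∃ y, leeWeight y ≤ j ∧ leeWeight (x - y) ≤ k := by
  induction j generalizing x with
  | zero => exact ⟨0, by simp, by simpa using h⟩
  | succ j ih =>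
    rcases eq_or_ne x 0 with rfl | hx
    · exact ⟨0, by simp only [leeWeight_zero]; positivity, by simp⟩
    obtain ⟨u, hu, hxu⟩ := exists_leeWeight_eq_one_and_leeWeight_sub_eq hx
    obtain ⟨y, hy, hxy⟩ := ih (x := x - u) (by push_cast at h; omega)
    refine ⟨y + u, (leeWeight_add_le y u).trans (by push_cast; omega), ?_⟩
    rwa [sub_add_eq_sub_sub_swap]

noncomputable def cube (n M : ℕ) : Finset (Fin n → ℤ) :=
  Fintype.piFinset fun _ => Icc (-(M : ℤ)) M

theorem mem_cube {M : ℕ} {x : Fin n → ℤ} : x ∈ cube n M ↔ ∀ i, |x i| ≤ M := by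
  simp [cube, abs_le]

theorem card_cube (n M : ℕ) : #(cube n M) = (2 * M + 1) ^ n := by
  simp only [cube, Fintype.card_piFinset, Int.card_Icc, prod_const, card_univ, Fintype.card_fin]
  congr 1
  omega

theorem add_mem_cube {M k : ℕ} {x y : Fin n → ℤ} (hx : x ∈ cube n M)
    (hy : leeWeight y ≤ k) :
    x + y ∈ cube n (M + k) := by
  refine mem_cube.2 fun i => ?_
  calc |(x + y) i| ≤ |x i| + |y i| := abs_add_le _ _
    _ ≤ M + k := add_le_add (mem_cube.1 hx i) ((abs_le_leeWeight y i).trans hy)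
    _ = (M + k : ℕ) := by push_cast; ring

noncomputable def leeBall (n e : ℕ) : Finset (Fin n → ℤ) :=
  {x ∈ cube n e | leeWeight x ≤ e}

theorem mem_leeBall {e : ℕ} {x : Fin n → ℤ} : x ∈ leeBall n e ↔ leeWeight x ≤ e := by
  simpa [leeBall, mem_cube] using fun h i => (abs_le_leeWeight x i).trans h

theorem ncard_LeeSphere (n e : ℕ) : (LeeSphere n e).ncard = #(leeBall n e) := by
  rw [← Set.ncard_coe_finset]
  congr
  ext x
  simp [mem_leeBall, LeeSphere, leeWeight]

theorem leeBall_mono : Monotone (leeBall n) := fun _ _ h _ hx =>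
  mem_leeBall.2 ((mem_leeBall.1 hx).trans (by exact_mod_cast h))

theorem ncard_LeeSphere_sub_ncard_LeeSphere (n e : ℕ) :
    ((LeeSphere n e).ncard : ℚ) - (LeeSphere n (e - 2)).ncard =
      #(leeBall n e \ leeBall n (e - 2)) := by
  have hsub := leeBall_mono (n := n) (Nat.sub_le e 2)
  rw [ncard_LeeSphere, ncard_LeeSphere, card_sdiff_of_subset hsub,
    Nat.cast_sub (card_le_card hsub)]

open Filter Topology in
theorem le_of_forall_mul_pow_le {a b k n : ℕ}
    (h : ∀ M : ℕ, a * (2 * M + 1) ^ n ≤ b * (2 * M + 1 + k) ^ n) : a ≤ b := by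
  have hodd : Tendsto (fun M : ℕ => 2 * M + 1) atTop atTop :=
    tendsto_atTop_mono (fun M => show M ≤ 2 * M + 1 by omega) tendsto_id
  have hlim : Tendsto (fun M : ℕ => (a : ℝ) * (((2 * M + 1 : ℕ) : ℝ) / ((2 * M + 1 : ℕ) + k)) ^ n)
      atTop (𝓝 (a * 1 ^ n)) :=
    (((tendsto_natCast_div_add_atTop (k : ℝ)).comp hodd).pow n).const_mul _
  have hle : (a : ℝ) * 1 ^ n ≤ b := by
    refine le_of_tendsto' hlim fun M => ?_
    rw [div_pow, ← mul_div_assoc, div_le_iff₀ (by positivity)]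
    exact_mod_cast h M
  simpa using hle

open Classical in
noncomputable def codewordsInCube (C : Set (Fin n → ℤ)) (M : ℕ) : Finset (Fin n → ℤ) :=
  {c ∈ cube n M | c ∈ C}

theorem mem_codewordsInCube {C : Set (Fin n → ℤ)} {M : ℕ} {c : Fin n → ℤ} :
    c ∈ codewordsInCube C M ↔ c ∈ cube n M ∧ c ∈ C := by
  simp [codewordsInCube]

namespace IsPLCode

variable {e : ℕ} {C : Set (Fin n → ℤ)}

theorem eq_of_leeWeight_sub_le (hC : IsPLCode n e C) {x c c' : Fin n → ℤ} (hc : c ∈ C)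
    (hc' : c' ∈ C) (hxc : leeWeight (x - c) ≤ e) (hxc' : leeWeight (x - c') ≤ e) : c = c' :=
  (hC x).unique ⟨hc, hxc⟩ ⟨hc', hxc'⟩

theorem two_mul_add_one_le_leeWeight_sub (hC : IsPLCode n e C) {c c' : Fin n → ℤ} (hc : c ∈ C)
    (hc' : c' ∈ C) (hne : c ≠ c') : 2 * e + 1 ≤ leeWeight (c - c') := by
  by_contra! h
  obtain ⟨y, hy, hcy⟩ :=
    exists_leeWeight_le_and_leeWeight_sub_le (x := c - c') (j := e) (k := e) (by omega)
  refine hne (hC.eq_of_leeWeight_sub_le (x := c' + y) hc hc' ?_ (by simpa using hy))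
  rwa [leeWeight_sub_comm, sub_add_eq_sub_sub]

theorem pow_le_card_mul_card_leeBall (hC : IsPLCode n e C) (M : ℕ) :
    (2 * M + 1) ^ n ≤ #(codewordsInCube C (M + e)) * #(leeBall n e) := by
  have hcover :
      cube n M ⊆ (codewordsInCube C (M + e) ×ˢ leeBall n e).image fun p => p.1 + p.2 := by
    intro x hx
    obtain ⟨c, ⟨hc, hxc⟩, -⟩ := hC x
    have hcx : leeWeight (c - x) ≤ e := by rw [leeWeight_sub_comm]; exact hxc
    refine mem_image.2 ⟨(c, x - c), mem_product.2 ⟨mem_codewordsInCube.2 ⟨?_, hc⟩,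
      mem_leeBall.2 hxc⟩, add_sub_cancel c x⟩
    simpa using add_mem_cube hx hcx
  calc (2 * M + 1) ^ n = #(cube n M) := (card_cube n M).symm
    _ ≤ _ := card_le_card hcover
    _ ≤ _ := card_image_le.trans (card_product _ _).le

theorem card_mul_card_leeBall_le_pow (hC : IsPLCode n e C) (M : ℕ) :
    #(codewordsInCube C M) * #(leeBall n e) ≤ (2 * (M + e) + 1) ^ n := by
  rw [← card_product, ← card_cube]
  refine card_le_card_of_injOn (fun p => p.1 + p.2) (fun p hp => ?_) fun p hp q hq hpq => ?_
  · obtain ⟨hp₁, hp₂⟩ := mem_product.1 hp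
    exact add_mem_cube (mem_codewordsInCube.1 hp₁).1 (mem_leeBall.1 hp₂)
  · obtain ⟨hp₁, hp₂⟩ := mem_product.1 hp
    obtain ⟨hq₁, hq₂⟩ := mem_product.1 hq
    replace hpq : p.1 + p.2 = q.1 + q.2 := hpq
    have h₁ : p.1 = q.1 := hC.eq_of_leeWeight_sub_le (x := p.1 + p.2)
      (mem_codewordsInCube.1 hp₁).2 (mem_codewordsInCube.1 hq₁).2
      (by simpa using mem_leeBall.1 hp₂) (by rw [hpq]; simpa using mem_leeBall.1 hq₂)
    exact Prod.ext h₁ (add_left_cancel (hpq.trans (by rw [h₁])))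

theorem sub_mem_image_add (hC : IsPLCode n e C) (he : 2 ≤ e) {L : ℕ} {c x : Fin n → ℤ}
    (hc : c ∈ codewordsInCube C L) (hx : leeWeight x = e + 2) :
    c - x ∈ (codewordsInCube C (L + (2 * e + 2)) ×ˢ (leeBall n e \ leeBall n (e - 2))).image
      fun p => p.1 + p.2 := by
  obtain ⟨hcL, hcC⟩ := mem_codewordsInCube.1 hc
  obtain ⟨c', ⟨hc'C, hc'⟩, -⟩ := hC (c - x)
  replace hc' : leeWeight (c - x - c') ≤ e := hc'
  have hne : c ≠ c' := by
    rintro rfl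
    rw [sub_sub_cancel_left, leeWeight_neg] at hc'
    omega
  have hdist := hC.two_mul_add_one_le_leeWeight_sub hcC hc'C hne
  have htri : leeWeight (c - c') ≤ leeWeight x + leeWeight (c - x - c') := by
    have := leeWeight_add_le x (c - x - c')
    rwa [show x + (c - x - c') = c - c' by abel] at this
  refine mem_image.2 ⟨(c', c - x - c'), mem_product.2 ⟨mem_codewordsInCube.2 ⟨?_, hc'C⟩,
    mem_sdiff.2 ⟨mem_leeBall.2 hc', ?_⟩⟩, add_sub_cancel c' _⟩
  · have hcc' : leeWeight (c' - c) ≤ ((2 * e + 2 : ℕ) : ℤ) := by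
      rw [leeWeight_sub_comm]
      push_cast
      omega
    simpa using add_mem_cube hcL hcc'
  · simp only [mem_leeBall, Nat.cast_sub he, not_le]
    omega

theorem card_codewordsInCube_mul_card_le (hC : IsPLCode n e C) (he : 2 ≤ e)
    {Λ : Finset (Fin n → ℤ)} (hΛ : ∀ x ∈ Λ, leeWeight x = e + 2) {m : ℕ}
    (hm : ∀ a, ((fun x => a + x) '' Λ ∩ C).ncard ≤ m) (L : ℕ) :
    #(codewordsInCube C L) * #Λ ≤
      m * (#(codewordsInCube C (L + (2 * e + 2))) * #(leeBall n e \ leeBall n (e - 2))) := by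
  set P := codewordsInCube C L ×ˢ Λ
  have hfiber : ∀ a ∈ P.image (fun p => p.1 - p.2), #{p ∈ P | p.1 - p.2 = a} ≤ m := by
    intro a _
    rw [← Set.ncard_coe_finset]
    refine (Set.ncard_le_ncard_of_injOn Prod.fst (fun p hp => ?_) (fun p hp q hq hpq => ?_)
      ((Λ.finite_toSet.image _).inter_of_left _)).trans (hm a)
    · obtain ⟨hpP, rfl⟩ := mem_filter.1 (mem_coe.1 hp)
      obtain ⟨hp₁, hp₂⟩ := mem_product.1 hpP
      exact ⟨⟨p.2, hp₂, sub_add_cancel _ _⟩, (mem_codewordsInCube.1 hp₁).2⟩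
    · obtain ⟨-, hpa⟩ := mem_filter.1 (mem_coe.1 hp)
      obtain ⟨-, hqa⟩ := mem_filter.1 (mem_coe.1 hq)
      refine Prod.ext hpq ?_
      rw [← hqa, hpq] at hpa
      exact sub_right_injective hpa
  calc #(codewordsInCube C L) * #Λ = #P := (card_product _ _).symm
    _ ≤ m * #(P.image fun p => p.1 - p.2) := card_le_mul_card_image P m hfiber
    _ ≤ m * #((codewordsInCube C (L + (2 * e + 2)) ×ˢ
          (leeBall n e \ leeBall n (e - 2))).image fun p => p.1 + p.2) := by
      gcongr
      intro a ha
      obtain ⟨p, hp, rfl⟩ := mem_image.1 ha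
      obtain ⟨hp₁, hp₂⟩ := mem_product.1 hp
      exact hC.sub_mem_image_add he hp₁ (hΛ _ hp₂)
    _ ≤ _ := by
      gcongr
      exact card_image_le.trans (card_product _ _).le

theorem card_le_mul_card_sdiff (hC : IsPLCode n e C) (he : 2 ≤ e) {Λ : Finset (Fin n → ℤ)}
    (hΛ : ∀ x ∈ Λ, leeWeight x = e + 2) {m : ℕ}
    (hm : ∀ a, ((fun x => a + x) '' Λ ∩ C).ncard ≤ m) :
    #Λ ≤ m * #(leeBall n e \ leeBall n (e - 2)) := by
  refine le_of_forall_mul_pow_le (n := n) (k := 8 * e + 4) fun M => ?_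
  set D := #(leeBall n e \ leeBall n (e - 2))
  calc #Λ * (2 * M + 1) ^ n ≤ #Λ * (#(codewordsInCube C (M + e)) * #(leeBall n e)) := by
        gcongr
        exact hC.pow_le_card_mul_card_leeBall M
    _ = #(codewordsInCube C (M + e)) * #Λ * #(leeBall n e) := by ring
    _ ≤ m * (#(codewordsInCube C (M + e + (2 * e + 2))) * D) * #(leeBall n e) :=
        Nat.mul_le_mul_right _ (hC.card_codewordsInCube_mul_card_le he hΛ hm _)
    _ = m * D * (#(codewordsInCube C (M + e + (2 * e + 2))) * #(leeBall n e)) := by ring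
    _ ≤ m * D * (2 * (M + e + (2 * e + 2) + e) + 1) ^ n := by
        gcongr
        exact hC.card_mul_card_leeBall_le_pow _
    _ = m * D * (2 * M + 1 + (8 * e + 4)) ^ n := by ring_nf

end IsPLCode

theorem finite_Lambda (n e s : ℕ) : (Lambda n e s).Finite :=
  (cube n s).finite_toSet.subset fun x hx =>
    mem_cube.2 fun i => abs_le.2 ⟨by linarith [(hx.2 i).1], (hx.2 i).2⟩

theorem exists_translate_many_codewords_general (n e s : ℕ) (he : 2 ≤ e)
    (C : Set (Fin n → ℤ)) (hC : IsPLCode n e C) :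
    ∃ a : Fin n → ℤ,
      ((Lambda n e s).ncard : ℚ) /
          (((LeeSphere n e).ncard : ℚ) - ((LeeSphere n (e - 2)).ncard : ℚ)) ≤
        ((((fun x => a + x) '' Lambda n e s) ∩ C).ncard : ℚ) := by
  obtain ⟨Λ, hΛ⟩ := (finite_Lambda n e s).exists_finset_coe
  have hweight : ∀ x ∈ Λ, leeWeight x = e + 2 := fun x hx =>
    (hΛ ▸ mem_coe.2 hx : x ∈ Lambda n e s).1
  rw [← hΛ, Set.ncard_coe_finset, ncard_LeeSphere_sub_ncard_LeeSphere]
  set count : (Fin n → ℤ) → ℕ := fun a =>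
    ((fun x => a + x) '' (Λ : Set (Fin n → ℤ)) ∩ C).ncard
  have hbdd : BddAbove (Set.range count) := ⟨#Λ, Set.forall_mem_range.2 fun a =>
    (Set.ncard_inter_le_ncard_left _ _).trans
      ((Set.ncard_image_le Λ.finite_toSet).trans (Set.ncard_coe_finset Λ).le)⟩
  obtain ⟨a, ha⟩ := Nat.sSup_mem (Set.range_nonempty count) hbdd
  have hΛ_le := hC.card_le_mul_card_sdiff he hweight fun a => le_csSup hbdd ⟨a, rfl⟩
  refine ⟨a, div_le_of_le_mul₀ (by positivity) (by positivity) ?_⟩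
  change (#Λ : ℚ) ≤ count a * _
  rw [ha]
  exact_mod_cast hΛ_le

/-- If `C` is a `PL(n,e)`-code with `e ≥ 2` and `s ≥ 1`, then some translate of `Λ(e,s)`
contains at least `|Λ(e,s)| / (|S(n,e)| − |S(n,e−2)|)` codewords. -/
theorem exists_translate_many_codewords (n e s : ℕ) (he : 2 ≤ e) (hs : 1 ≤ s)
    (C : Set (Fin n → ℤ)) (hC : IsPLCode n e C) :
    ∃ a : Fin n → ℤ,
      ((Lambda n e s).ncard : ℚ) /
          (((LeeSphere n e).ncard : ℚ) - ((LeeSphere n (e - 2)).ncard : ℚ)) ≤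
        ((((fun x => a + x) '' Lambda n e s) ∩ C).ncard : ℚ) :=
  exists_translate_many_codewords_general n e s he C hC
end

section
/- Let n ≥ 1 and e ≥ 1 be integers. Suppose there exists a function g : ℤ^n → ℝ satisfying: (0) there exist ε > 0 and K > 0 with |g(x)| ≤ K·(1 + Σ_i|x_i|)^{−n−ε} for all x; (1) g(x) = 0 for all x ∈ S(n,e); (2) Σ_{y ∈ S(n,e)} g(x − y) ≥ 0 for all x ∉ S(n,2e); (3) Σ_{x ∈ ℤ^n} g(x) < 0 (this sum converges absolutely by (0)). Then there is no PL(n,e)-code. -/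
lemma step_abs (w : ℤ) (hw : w ≠ 0) : |w - w.sign| = |w| - 1 := by
  rcases lt_or_gt_of_ne hw with h | h
  · rw [Int.sign_eq_neg_one_of_neg h, abs_of_neg h, abs_of_nonpos (by omega)]; ring
  · rw [Int.sign_eq_one_of_pos h, abs_of_pos h, abs_of_nonneg (by omega)]

lemma update_abs_sum {n : ℕ} (z c : Fin n → ℤ) (i : Fin n) (v : ℤ) :
    (∑ j, |Function.update z i v j - c j|)
      = (∑ j, |z j - c j|) - |z i - c i| + |v - c i| := by
  have hfun : (fun j => |Function.update z i v j - c j|)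
      = Function.update (fun j => |z j - c j|) i |v - c i| := by
    funext j
    rcases eq_or_ne j i with rfl | h
    · simp
    · simp [Function.update_of_ne h]
  rw [hfun, Finset.sum_update_of_mem (Finset.mem_univ i), Finset.sdiff_singleton_eq_erase]
  rw [← Finset.add_sum_erase Finset.univ _ (Finset.mem_univ i)]
  ring

lemma lee_midpoint {n : ℕ} (a b : Fin n → ℤ) (t : ℕ) (htd : (t : ℤ) ≤ ∑ i, |a i - b i|) :
    ∃ z : Fin n → ℤ, (∑ i, |z i - a i|) ≤ (t : ℤ) ∧
      (∑ i, |z i - b i|) ≤ (∑ i, |a i - b i|) - t := by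
  induction t with
  | zero => exact ⟨a, by simp, by simp⟩
  | succ k ih =>
    obtain ⟨z, hza, hzb⟩ := ih (by push_cast at htd ⊢; omega)
    by_cases hcase : (∑ i, |z i - b i|) ≤ (∑ i, |a i - b i|) - (k + 1 : ℕ)
    · exact ⟨z, le_trans hza (by push_cast; omega), hcase⟩
    · have hpos : 1 ≤ ∑ i, |z i - b i| := by
        by_contra h
        have h0 : (0:ℤ) ≤ ∑ i, |z i - b i| := Finset.sum_nonneg fun i _ => abs_nonneg _
        push_cast at hcase htd
        omega
      have hex : ∃ i, z i ≠ b i := by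
        by_contra h
        push_neg at h
        simp [h] at hpos
      obtain ⟨i, hi⟩ := hex
      set w : ℤ := z i - b i with hw
      have hwne : w ≠ 0 := sub_ne_zero.mpr hi
      refine ⟨Function.update z i (z i - w.sign), ?_, ?_⟩
      · rw [update_abs_sum]
        have h1 : |z i - w.sign - a i| ≤ |z i - a i| + 1 := by
          calc |z i - w.sign - a i| = |(z i - a i) + (-w.sign)| := by congr 1; ring
            _ ≤ |z i - a i| + |(-w.sign)| := abs_add_le _ _
            _ ≤ |z i - a i| + 1 := by
                have : |(-w.sign)| ≤ 1 := by
                  rcases Int.lt_or_lt_of_ne hwne with h | h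
                  · simp [Int.sign_eq_neg_one_of_neg h]
                  · simp [Int.sign_eq_one_of_pos h]
                omega
        push_cast
        omega
      · rw [update_abs_sum]
        have h1 : |z i - w.sign - b i| = |z i - b i| - 1 := by
          have heq : z i - w.sign - b i = w - w.sign := by rw [hw]; ring
          rw [heq, step_abs w hwne, hw]
        push_cast at hcase ⊢
        omega

/-- Linear-programming criterion: if there is a function `g : ℤ^n → ℝ` with fast decay,
vanishing on `S(n,e)`, whose convolution with the indicator of `S(n,e)` is nonnegative
outside `S(n,2e)`, and with negative total sum, then there is no `PL(n,e)`-code. -/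
theorem no_PL_code_of_LP_witness (n e : ℕ) (hn : 1 ≤ n) (he : 1 ≤ e)
    (g : (Fin n → ℤ) → ℝ)
    (h0 : ∃ ε > (0 : ℝ), ∃ K > (0 : ℝ), ∀ x : Fin n → ℤ,
      |g x| ≤ K * (1 + ∑ i, |(x i : ℝ)|) ^ (-(n : ℝ) - ε))
    (h1 : ∀ x ∈ LeeSphere n e, g x = 0)
    (h2 : ∀ x : Fin n → ℤ, x ∉ LeeSphere n (2 * e) →
      0 ≤ ∑' y : (LeeSphere n e : Set (Fin n → ℤ)), g (x - (y : Fin n → ℤ)))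
    (h3 : (∑' x : Fin n → ℤ, g x) < 0) :
    ¬ ∃ C : Set (Fin n → ℤ), IsPLCode n e C := by
  rintro ⟨C, hC⟩
  by_cases hg : Summable g
  swap
  · rw [tsum_eq_zero_of_not_summable hg] at h3
    exact absurd h3 (lt_irrefl 0)
  obtain ⟨c₀, ⟨hc₀C, -⟩, -⟩ := hC 0
  -- separation: any other codeword is far from c₀
  have hsep : ∀ c ∈ C, c ≠ c₀ → (c - c₀) ∉ LeeSphere n (2 * e) := by
    intro c hcC hne hmem
    set d : ℤ := ∑ i, |c i - c₀ i| with hd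
    have hd0 : 0 ≤ d := Finset.sum_nonneg fun i _ => abs_nonneg _
    have hd2e : d ≤ 2 * e := by
      have := hmem
      simp only [LeeSphere, Set.mem_setOf_eq, Pi.sub_apply] at this
      push_cast at this
      omega
    set t : ℕ := (d - e).toNat with ht
    have htz : (t : ℤ) = max (d - e) 0 := Int.toNat_eq_max _
    obtain ⟨z, hza, hzb⟩ := lee_midpoint c c₀ t (by omega)
    have h1' : (∑ i, |z i - c i|) ≤ (e : ℤ) := by omega
    have h2' : (∑ i, |z i - c₀ i|) ≤ (e : ℤ) := by omega
    exact hne ((hC z).unique ⟨hcC, h1'⟩ ⟨hc₀C, h2'⟩)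
  -- the bijection (c, y) ↦ c - c₀ - y
  set S : Set (Fin n → ℤ) := LeeSphere n e with hS
  set m : ↥C × ↥S → (Fin n → ℤ) := fun p => (p.1 : Fin n → ℤ) - c₀ - (p.2 : Fin n → ℤ)
    with hm
  have habs : ∀ (x c : Fin n → ℤ), (∑ i, |(c - c₀ - x) i|) = ∑ i, |(x + c₀) i - c i| := by
    intro x c
    refine Finset.sum_congr rfl fun i _ => ?_
    simp only [Pi.sub_apply, Pi.add_apply]
    rw [show c i - c₀ i - x i = -((x i + c₀ i) - c i) by ring, abs_neg]
  have hmem_iff : ∀ x : Fin n → ℤ, x ∈ S ↔ (∑ i, |x i|) ≤ (e : ℤ) := fun x => Iff.rfl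
  have haux : ∀ (c y : Fin n → ℤ), (∑ i, |((c - c₀ - y) + c₀) i - c i|) = ∑ i, |y i| := by
    intro c y
    refine Finset.sum_congr rfl fun i _ => ?_
    simp only [Pi.sub_apply, Pi.add_apply]
    rw [show c i - c₀ i - y i + c₀ i - c i = -(y i) by ring, abs_neg]
  have hbij : Function.Bijective m := by
    constructor
    · rintro ⟨⟨c, hc⟩, ⟨y, hy⟩⟩ ⟨⟨c', hc'⟩, ⟨y', hy'⟩⟩ h
      simp only [hm] at h
      have hyme : (∑ i, |y i|) ≤ (e : ℤ) := hy
      have hy'me : (∑ i, |y' i|) ≤ (e : ℤ) := hy'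
      have hcc' : c = c' := by
        refine (hC ((c - c₀ - y) + c₀)).unique ⟨hc, by rw [haux c y]; exact hyme⟩
          ⟨hc', ?_⟩
        rw [h, haux c' y']
        exact hy'me
      have hyy' : y = y' := by
        funext i
        have hfi := congrFun h i
        simp only [Pi.sub_apply, hcc'] at hfi
        omega
      simp [Prod.ext_iff, Subtype.ext_iff, hcc', hyy']
    · intro x
      obtain ⟨c, ⟨hcC, hcd⟩, -⟩ := hC (x + c₀)
      have hyS : c - c₀ - x ∈ S := by
        rw [hmem_iff, habs x c]
        exact hcd
      refine ⟨⟨⟨c, hcC⟩, ⟨c - c₀ - x, hyS⟩⟩, ?_⟩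
      simp only [hm]
      abel
  set E : (↥C × ↥S) ≃ (Fin n → ℤ) := Equiv.ofBijective m hbij with hE
  have hsum : Summable fun p : ↥C × ↥S => g (m p) := E.summable_iff.mpr hg
  have key : (∑' x : Fin n → ℤ, g x)
      = ∑' c : ↥C, ∑' y : ↥S, g ((c : Fin n → ℤ) - c₀ - (y : Fin n → ℤ)) := by
    rw [← E.tsum_eq g]
    exact Summable.tsum_prod hsum
  have hnonneg : 0 ≤ ∑' c : ↥C, ∑' y : ↥S, g ((c : Fin n → ℤ) - c₀ - (y : Fin n → ℤ)) := by
    refine tsum_nonneg fun c => ?_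
    by_cases hc : (c : Fin n → ℤ) = c₀
    · have hzero : ∀ y : ↥S, g ((c : Fin n → ℤ) - c₀ - (y : Fin n → ℤ)) = 0 := by
        intro y
        rw [hc, show c₀ - c₀ - (y : Fin n → ℤ) = -(y : Fin n → ℤ) by abel]
        refine h1 _ ?_
        have hyme : (∑ i, |(y : Fin n → ℤ) i|) ≤ (e : ℤ) := y.2
        show (∑ i, |(-(y : Fin n → ℤ)) i|) ≤ (e : ℤ)
        simpa using hyme
      rw [tsum_congr hzero, tsum_zero]
    · exact h2 _ (hsep _ c.2 hc)
  rw [key] at h3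
  exact absurd h3 (not_lt.mpr hnonneg)
end

section
/- Let n ≥ 1, e ≥ 0 and q ≥ 2e + 1 be integers, and let π : ℤ^n → (ℤ/qℤ)^n be the coordinatewise reduction map. Then C ↦ π⁻¹(C) is a bijection from the collection of PL(n,e,q)-codes onto the collection of q-periodic PL(n,e)-codes, with inverse given by taking the image under π. -/
/-- `C ⊆ ℤ^n` is `q`-periodic: `C + q·e_i = C` for each standard basis vector `e_i`. -/
def QPeriodic (n q : ℕ) (C : Set (Fin n → ℤ)) : Prop :=
  ∀ i : Fin n, ∀ x : Fin n → ℤ, x ∈ C ↔ x + Pi.single i (q : ℤ) ∈ C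

/-- The Lee distance on `(ℤ/qℤ)^n`, computed with representatives in `{0, …, q−1}`. -/
def leeDistZMod (n q : ℕ) (u v : Fin n → ZMod q) : ℕ :=
  ∑ i, min (((u i).val : ℤ) - ((v i).val : ℤ)).natAbs
    (q - (((u i).val : ℤ) - ((v i).val : ℤ)).natAbs)

/-- A `PL(n,e,q)`-code in `(ℤ/qℤ)^n`. -/
def IsPLqCode (n e q : ℕ) (C : Set (Fin n → ZMod q)) : Prop :=
  ∀ x : Fin n → ZMod q, ∃! c, c ∈ C ∧ leeDistZMod n q x c ≤ e

/-- Coordinatewise reduction `ℤ^n → (ℤ/qℤ)^n`. -/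
def redMap (n q : ℕ) : (Fin n → ℤ) → (Fin n → ZMod q) :=
  fun x i => (x i : ZMod q)

/-!
The coordinate Lee distance `min (|r|, q - |r|)`, where `r` is the difference of the
representatives in `{0, …, q - 1}`, is the least `|s|` over integers `s ≡ r (mod q)`, and this
least value is attained. Hence the Lee distance from `π x` to
`π c` is the least `ℓ¹` distance from `x` to a lift of `π c`, attained by some lift. When
`q ≥ 2e + 1`, two lifts of the same residue vector within distance `e` of `x` coincide, so Lee
balls of radius `e` correspond to `ℓ¹` balls. Finally, `q`-periodic sets are exactly the unions
of fibres of `π`, on which `π⁻¹` and `π ''` are mutually inverse.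
-/

section LeeAbs

variable {q : ℕ}

def leeAbs (u v : ZMod q) : ℕ :=
  min ((u.val : ℤ) - v.val).natAbs (q - ((u.val : ℤ) - v.val).natAbs)

theorem leeDistZMod_eq_sum {n : ℕ} (u v : Fin n → ZMod q) :
    leeDistZMod n q u v = ∑ i, leeAbs (u i) (v i) := rfl

variable [NeZero q]

theorem intCast_val_sub_val (u v : ZMod q) : (((u.val : ℤ) - v.val : ℤ) : ZMod q) = u - v := by
  push_cast
  simp only [ZMod.natCast_zmod_val]

theorem natAbs_val_sub_val_lt (u v : ZMod q) : ((u.val : ℤ) - v.val).natAbs < q := by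
  have := ZMod.val_lt u
  have := ZMod.val_lt v
  omega

theorem leeAbs_le_natAbs {u v : ZMod q} {s : ℤ} (hs : (s : ZMod q) = u - v) :
    leeAbs u v ≤ s.natAbs := by
  have hr := natAbs_val_sub_val_lt u v
  rw [← intCast_val_sub_val, ZMod.intCast_eq_intCast_iff_dvd_sub] at hs
  unfold leeAbs
  rcases eq_or_ne ((u.val : ℤ) - v.val) s with heq | hne
  · omega
  · have := Int.natAbs_le_of_dvd_ne_zero hs (sub_ne_zero.2 hne)
    omega

theorem exists_natAbs_eq_leeAbs (u v : ZMod q) :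
    ∃ s : ℤ, (s : ZMod q) = u - v ∧ s.natAbs = leeAbs u v := by
  set r : ℤ := (u.val : ℤ) - v.val with hr_def
  have hr := natAbs_val_sub_val_lt u v
  have hcast : ∀ k : ℤ, ((r + k * q : ℤ) : ZMod q) = u - v := fun k => by
    push_cast
    rw [ZMod.natCast_self, mul_zero, add_zero, ← intCast_val_sub_val]
  unfold leeAbs
  rw [← hr_def]
  by_cases hsmall : 2 * r.natAbs ≤ q
  · exact ⟨r, by simpa using hcast 0, by omega⟩
  · rcases le_or_gt 0 r with hpos | hneg
    · exact ⟨r - q, by simpa [sub_eq_add_neg] using hcast (-1), by omega⟩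
    · exact ⟨r + q, by simpa using hcast 1, by omega⟩

end LeeAbs

section Reduction

variable {n q : ℕ}

open scoped Pointwise

theorem redMap_eq_iff {x y : Fin n → ℤ} :
    redMap n q x = redMap n q y ↔ ∀ i, (q : ℤ) ∣ y i - x i := by
  simp only [funext_iff, redMap, ZMod.intCast_eq_intCast_iff_dvd_sub]

theorem redMap_surjective : Function.Surjective (redMap n q) := fun v =>
  ⟨fun i => (v i).cast, funext fun i => ZMod.intCast_zmod_cast (v i)⟩

theorem redMap_add_single (x : Fin n → ℤ) (i : Fin n) :
    redMap n q (x + Pi.single i (q : ℤ)) = redMap n q x :=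
  redMap_eq_iff.2 fun j => by
    rcases eq_or_ne j i with rfl | hji <;> simp [*]

theorem eq_of_redMap_eq_of_dist_le {e : ℕ} (hq : 2 * e + 1 ≤ q) {x c c' : Fin n → ℤ}
    (hcc' : redMap n q c = redMap n q c')
    (hc : ∑ i, |x i - c i| ≤ e) (hc' : ∑ i, |x i - c' i| ≤ e) : c = c' := by
  funext i
  have hi : |x i - c i| ≤ e :=
    (Finset.single_le_sum (fun j _ => abs_nonneg (x j - c j)) (Finset.mem_univ i)).trans hc
  have hi' : |x i - c' i| ≤ e :=
    (Finset.single_le_sum (fun j _ => abs_nonneg (x j - c' j)) (Finset.mem_univ i)).trans hc'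
  have hlt : |c' i - c i| < q := by
    calc |c' i - c i| = |(x i - c i) - (x i - c' i)| := by ring_nf
      _ ≤ |x i - c i| + |x i - c' i| := abs_sub _ _
      _ < q := by omega
  exact (sub_eq_zero.1 (Int.eq_zero_of_abs_lt_dvd (redMap_eq_iff.1 hcc' i) hlt)).symm

theorem leeDistZMod_redMap_le [NeZero q] (x c : Fin n → ℤ) :
    (leeDistZMod n q (redMap n q x) (redMap n q c) : ℤ) ≤ ∑ i, |x i - c i| := by
  rw [leeDistZMod_eq_sum, Nat.cast_sum]
  gcongr with i
  rw [← Int.natCast_natAbs, Nat.cast_le]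
  exact leeAbs_le_natAbs (by simp [redMap])

theorem exists_redMap_eq_sum_eq_leeDistZMod [NeZero q] (x : Fin n → ℤ) (v : Fin n → ZMod q) :
    ∃ c, redMap n q c = v ∧ ∑ i, |x i - c i| = leeDistZMod n q (redMap n q x) v := by
  choose s hs hs_abs using fun i => exists_natAbs_eq_leeAbs (redMap n q x i) (v i)
  refine ⟨x - s, funext fun i => by simp [redMap, hs i], ?_⟩
  rw [leeDistZMod_eq_sum, Nat.cast_sum]
  simp [← hs_abs]

theorem QPeriodic.mem_iff_of_redMap_eq {D : Set (Fin n → ℤ)} (hD : QPeriodic n q D)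
    {x y : Fin n → ℤ} (hxy : redMap n q x = redMap n q y) : x ∈ D ↔ y ∈ D := by
  -- The stabilizer of `D` is a subgroup containing every `q • eᵢ`, hence all of `qℤⁿ`.
  have hsingle : ∀ i, Pi.single i (q : ℤ) ∈ AddAction.stabilizer (Fin n → ℤ) D := fun i =>
    AddAction.mem_stabilizer_set.2 fun z => by rw [vadd_eq_add, add_comm, hD i z]
  choose k hk using redMap_eq_iff.1 hxy
  have hyx : y - x = ∑ i, k i • Pi.single i (q : ℤ) := by
    simp_rw [← Pi.single_smul, smul_eq_mul, mul_comm (k _), ← hk, Finset.univ_sum_single,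
      Pi.sub_def]
  have hmem : y - x ∈ AddAction.stabilizer (Fin n → ℤ) D := by
    rw [hyx]
    exact AddSubgroup.sum_mem _ fun i _ => AddSubgroup.zsmul_mem _ (hsingle i) _
  simpa using (AddAction.mem_stabilizer_set.1 hmem x).symm

theorem QPeriodic.preimage_image_redMap {D : Set (Fin n → ℤ)} (hD : QPeriodic n q D) :
    redMap n q ⁻¹' (redMap n q '' D) = D :=
  Set.Subset.antisymm (fun _ ⟨_, hd, hdx⟩ => (hD.mem_iff_of_redMap_eq hdx).1 hd)
    (Set.subset_preimage_image _ _)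

theorem qPeriodic_preimage_redMap (C : Set (Fin n → ZMod q)) :
    QPeriodic n q (redMap n q ⁻¹' C) :=
  fun i x => by rw [Set.mem_preimage, Set.mem_preimage, redMap_add_single]

end Reduction

theorem IsPLqCode.preimage_redMap {n e q : ℕ} (hq : 2 * e + 1 ≤ q) {C : Set (Fin n → ZMod q)}
    (hC : IsPLqCode n e q C) : IsPLCode n e (redMap n q ⁻¹' C) := by
  have : NeZero q := ⟨by omega⟩
  intro x
  obtain ⟨v, ⟨hvC, hv⟩, hv_unique⟩ := hC (redMap n q x)
  obtain ⟨c, rfl, hc⟩ := exists_redMap_eq_sum_eq_leeDistZMod x v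
  refine ⟨c, ⟨hvC, by rw [hc]; exact_mod_cast hv⟩, fun c' ⟨hc'C, hc'⟩ => ?_⟩
  have hred : redMap n q c' = redMap n q c :=
    hv_unique _ ⟨hc'C, by exact_mod_cast (leeDistZMod_redMap_le x c').trans hc'⟩
  exact eq_of_redMap_eq_of_dist_le hq hred hc' (by rw [hc]; exact_mod_cast hv)

theorem IsPLCode.image_redMap {n e q : ℕ} [NeZero q] {D : Set (Fin n → ℤ)}
    (hD : IsPLCode n e D) (hper : QPeriodic n q D) : IsPLqCode n e q (redMap n q '' D) := by
  intro y
  obtain ⟨x, rfl⟩ := redMap_surjective y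
  obtain ⟨c, ⟨hcD, hc⟩, hc_unique⟩ := hD x
  have hlee : leeDistZMod n q (redMap n q x) (redMap n q c) ≤ e := by
    exact_mod_cast (leeDistZMod_redMap_le x c).trans hc
  refine ⟨redMap n q c, ⟨⟨c, hcD, rfl⟩, hlee⟩, ?_⟩
  rintro _ ⟨⟨d, hdD, rfl⟩, hd⟩
  obtain ⟨c', hc'd, hc'⟩ := exists_redMap_eq_sum_eq_leeDistZMod x (redMap n q d)
  have hc'D : c' ∈ D := (hper.mem_iff_of_redMap_eq hc'd).2 hdD
  rw [← hc'd, hc_unique c' ⟨hc'D, by rw [hc']; exact_mod_cast hd⟩]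

theorem PLq_codes_biject_with_periodic_PL_codes_general (n e q : ℕ)
    (hq : 2 * e + 1 ≤ q) :
    Set.BijOn (fun C => redMap n q ⁻¹' C)
        {C : Set (Fin n → ZMod q) | IsPLqCode n e q C}
        {D : Set (Fin n → ℤ) | IsPLCode n e D ∧ QPeriodic n q D} ∧
      Set.InvOn (fun D => redMap n q '' D) (fun C => redMap n q ⁻¹' C)
        {C : Set (Fin n → ZMod q) | IsPLqCode n e q C}
        {D : Set (Fin n → ℤ) | IsPLCode n e D ∧ QPeriodic n q D} := by
  have : NeZero q := ⟨by omega⟩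
  have hinv : Set.InvOn (fun D => redMap n q '' D) (fun C => redMap n q ⁻¹' C)
      {C | IsPLqCode n e q C} {D | IsPLCode n e D ∧ QPeriodic n q D} :=
    ⟨fun C _ => Set.image_preimage_eq C redMap_surjective,
      fun D hD => hD.2.preimage_image_redMap⟩
  refine ⟨hinv.bijOn ?_ ?_, hinv⟩
  · exact fun C hC => ⟨hC.preimage_redMap hq, qPeriodic_preimage_redMap C⟩
  · exact fun D hD => hD.1.image_redMap hD.2

/-- For `q ≥ 2e + 1`, taking preimages under the reduction map `π : ℤ^n → (ℤ/qℤ)^n` is a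
bijection from the `PL(n,e,q)`-codes onto the `q`-periodic `PL(n,e)`-codes, with inverse
given by taking images under `π`. -/
theorem PLq_codes_biject_with_periodic_PL_codes (n e q : ℕ) (hn : 1 ≤ n)
    (hq : 2 * e + 1 ≤ q) :
    Set.BijOn (fun C => redMap n q ⁻¹' C)
        {C : Set (Fin n → ZMod q) | IsPLqCode n e q C}
        {D : Set (Fin n → ℤ) | IsPLCode n e D ∧ QPeriodic n q D} ∧
      Set.InvOn (fun D => redMap n q '' D) (fun C => redMap n q ⁻¹' C)
        {C : Set (Fin n → ZMod q) | IsPLqCode n e q C}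
        {D : Set (Fin n → ℤ) | IsPLCode n e D ∧ QPeriodic n q D} :=
  PLq_codes_biject_with_periodic_PL_codes_general n e q hq
end

section
/- Let L ⊆ ℤ^n be a tiling of ℤ^n by translates of a finite set V ⊆ ℤ^n, and let a be an integer relatively prime to |V|. Then L is also a tiling of ℤ^n by translates of the blowout tile a·V = {a·v : v ∈ V}; that is, every x ∈ ℤ^n has a unique representation x = a·v + l with v ∈ V and l ∈ L. -/
/-!
Tijdeman's blowout argument. For `x` and `b`, count the `v ∈ V` with `x - b • v ∈ L`;
`L` tiles by `b • V` when this count is always `1`. In the group ring `R[G]` put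
`[bV] = ∑ v ∈ V, single (b • v) 1`. If `L` tiles by `b • V`, the mass that `[bV] * B` puts
on `x - L` equals the total mass of `B`. Over `ZMod p`, Frobenius gives `[bV] ^ p = [pbV]`, so the
count for `p * b` is `≡ |V| ^ (p - 1) ≡ 1 (mod p)` whenever `p ∤ |V|`; in particular it is
positive. Double counting, `∑ u ∈ V, count (y - b • u) = |V|`, upgrades "at least one
representation everywhere" to "exactly one", and likewise "at most one", which `-b • V`
satisfies for free. Induction over the prime factors of `a` finishes the proof.
-/

/-- A set `L ⊆ ℤ^n` tiles `ℤ^n` by translates of `V` if every `x ∈ ℤ^n` has a unique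
representation `x = v + l` with `v ∈ V` and `l ∈ L`. -/
def IsTiling {n : ℕ} (V L : Set (Fin n → ℤ)) : Prop :=
  ∀ x : Fin n → ℤ, ∃! p : (Fin n → ℤ) × (Fin n → ℤ),
    p.1 ∈ V ∧ p.2 ∈ L ∧ x = p.1 + p.2

open Finset

variable {G : Type*}

section Counting

variable [AddCommGroup G]

open scoped Classical in
noncomputable def coverCount (V : Finset G) (L : Set G) (a : ℤ) (x : G) : ℕ :=
  #{v ∈ V | x - a • v ∈ L}

def IsScaledTiling (V : Finset G) (L : Set G) (a : ℤ) : Prop :=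
  ∀ x, coverCount V L a x = 1

variable {V : Finset G} {L : Set G} {a b c : ℤ}

theorem coverCount_eq_one_iff {x : G} :
    coverCount V L a x = 1 ↔ ∃! v, v ∈ V ∧ x - a • v ∈ L := by
  simp only [coverCount, card_eq_one_iff_existsUnique, mem_filter]

theorem isScaledTiling_iff : IsScaledTiling V L a ↔
    ∀ x, ∃! p : G × G, p.1 ∈ (V : Set G) ∧ p.2 ∈ L ∧ x = a • p.1 + p.2 := by
  refine forall_congr' fun x => coverCount_eq_one_iff.trans ⟨?_, ?_⟩
  · rintro ⟨v, ⟨hv, hl⟩, huniq⟩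
    refine ⟨(v, x - a • v), ⟨hv, hl, (add_sub_cancel _ _).symm⟩, ?_⟩
    rintro ⟨w, l⟩ ⟨hw, hl', rfl⟩
    obtain rfl := huniq w ⟨hw, by simpa using hl'⟩
    simp
  · rintro ⟨⟨v, l⟩, ⟨hv, hl, rfl⟩, huniq⟩
    refine ⟨v, ⟨hv, by simpa using hl⟩, fun w ⟨hw, hl'⟩ => ?_⟩
    have hw' : a • v + l = a • w + (a • v + l - a • w) := (add_sub_cancel _ _).symm
    exact congrArg Prod.fst (huniq (w, a • v + l - a • w) ⟨hw, hl', hw'⟩)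

namespace IsScaledTiling

theorem nonempty (hb : IsScaledTiling V L b) : V.Nonempty := by
  obtain ⟨v, hv, -⟩ := coverCount_eq_one_iff.mp (hb 0)
  exact ⟨v, hv.1⟩

theorem sum_coverCount (hb : IsScaledTiling V L b) (c : ℤ) (y : G) :
    ∑ u ∈ V, coverCount V L c (y - b • u) = #V := by
  classical
  calc ∑ u ∈ V, coverCount V L c (y - b • u)
      = ∑ u ∈ V, ∑ v ∈ V, if y - c • v - b • u ∈ L then 1 else 0 := by
        refine sum_congr rfl fun u _ => ?_
        rw [coverCount, card_filter]
        simp only [sub_right_comm]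
    _ = ∑ v ∈ V, 1 := by
        rw [sum_comm]
        refine sum_congr rfl fun v _ => ?_
        rw [← card_filter]
        exact hb _
    _ = #V := (card_eq_sum_ones V).symm

theorem of_forall_one_le (hb : IsScaledTiling V L b) (hc : ∀ x, 1 ≤ coverCount V L c x) :
    IsScaledTiling V L c := by
  intro x
  obtain ⟨u, hu⟩ := hb.nonempty
  have hsum : ∑ _u ∈ V, 1 = ∑ u' ∈ V, coverCount V L c (x + b • u - b • u') := by
    rw [← card_eq_sum_ones, hb.sum_coverCount]
  simpa using ((sum_eq_sum_iff_of_le fun _ _ => hc _).mp hsum u hu).symm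

theorem of_forall_le_one (hb : IsScaledTiling V L b) (hc : ∀ x, coverCount V L c x ≤ 1) :
    IsScaledTiling V L c := by
  intro x
  obtain ⟨u, hu⟩ := hb.nonempty
  have hsum : ∑ u' ∈ V, coverCount V L c (x + b • u - b • u') = ∑ _u ∈ V, 1 := by
    rw [← card_eq_sum_ones, hb.sum_coverCount]
  simpa using (sum_eq_sum_iff_of_le fun _ _ => hc _).mp hsum u hu

theorem coverCount_neg_le_one (hc : IsScaledTiling V L c) (x : G) :
    coverCount V L (-c) x ≤ 1 := by
  by_contra! h
  rw [coverCount] at h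
  obtain ⟨v₁, hv₁, v₂, hv₂, hne⟩ := one_lt_card.mp h
  simp only [mem_filter, neg_smul, sub_neg_eq_add] at hv₁ hv₂
  -- two representations of `x` by `-c • V` give two of `x + c • v₁ + c • v₂` by `c • V`
  have : 1 < coverCount V L c (x + c • v₁ + c • v₂) := by
    rw [coverCount]
    refine one_lt_card.mpr ⟨v₁, ?_, v₂, ?_, hne⟩ <;>
      simp only [mem_filter, add_sub_cancel_right]
    · exact ⟨hv₁.1, by rw [add_sub_right_comm, add_sub_cancel_right]; exact hv₂.2⟩
    · exact ⟨hv₂.1, hv₁.2⟩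
  exact (hc _).not_gt this

theorem neg (hc : IsScaledTiling V L c) : IsScaledTiling V L (-c) :=
  hc.of_forall_le_one hc.coverCount_neg_le_one

theorem zero_of_card_eq_one (hb : IsScaledTiling V L b) (hV : #V = 1) :
    IsScaledTiling V L 0 := by
  obtain ⟨v, rfl⟩ := card_eq_one.mp hV
  intro x
  have hx := hb (x + b • v)
  simp only [coverCount, filter_singleton, add_sub_cancel_right, zero_smul, sub_zero] at hx ⊢
  split_ifs at hx ⊢ <;> simp_all

end IsScaledTiling

end Counting

namespace AddMonoidAlgebra

variable (R : Type*) [CommRing R]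

open scoped Classical in
noncomputable def mass (S : Set G) : AddMonoidAlgebra R G →+ R :=
  (Finsupp.liftAddHom fun y => if y ∈ S then AddMonoidHom.id R else 0).comp
    coeffAddEquiv.toAddMonoidHom

variable {R}

open scoped Classical in
theorem mass_single (S : Set G) (y : G) (r : R) :
    mass R S (single y r) = if y ∈ S then r else 0 := by
  simp only [mass, AddMonoidHom.comp_apply, AddEquiv.coe_toAddMonoidHom, coeffAddEquiv_apply,
    coeff_single, Finsupp.liftAddHom_apply_single]
  split_ifs <;> rfl

variable [AddCommGroup G] {V : Finset G} {L : Set G} {b : ℤ}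

variable (R) in
noncomputable def scaledSum (V : Finset G) (b : ℤ) : AddMonoidAlgebra R G :=
  ∑ v ∈ V, single (b • v) 1

variable (R) in
noncomputable abbrev augmentation : AddMonoidAlgebra R G →ₐ[R] R :=
  lift R R G 1

theorem augmentation_scaledSum : augmentation R (scaledSum R V b) = #V := by
  simp [scaledSum, lift_single]

theorem mass_scaledSum (x : G) :
    mass R {y | x - y ∈ L} (scaledSum R V b) = coverCount V L b x := by
  classical
  simp only [scaledSum, map_sum, mass_single, Set.mem_ofPred_eq, coverCount, natCast_card_filter]

theorem _root_.IsScaledTiling.mass_scaledSum_mul (hb : IsScaledTiling V L b) (x : G)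
    (B : AddMonoidAlgebra R G) :
    mass R {y | x - y ∈ L} (scaledSum R V b * B) = augmentation R B := by
  classical
  induction B using induction_linear with
  | zero => simp
  | add B₁ B₂ h₁ h₂ => rw [mul_add, map_add, map_add, h₁, h₂]
  | single y r =>
    have hy := hb (x - y)
    rw [coverCount] at hy
    simp only [scaledSum, sum_mul, single_mul_single, one_mul, map_sum, mass_single,
      Set.mem_ofPred_eq, sub_add_eq_sub_sub_swap, ← sum_filter, sum_const, hy, one_smul,
      lift_single, augmentation, MonoidHom.one_apply, smul_eq_mul, mul_one]

theorem scaledSum_pow_char (p : ℕ) [CharP R p] [Fact p.Prime] :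
    scaledSum R V b ^ p = scaledSum R V (p * b) := by
  have : CharP (AddMonoidAlgebra R G) p := charP_of_injective_algebraMap' R p
  simp only [scaledSum, sum_pow_char, single_pow, one_pow, natCast_zsmul, mul_smul]

end AddMonoidAlgebra

namespace IsScaledTiling

open AddMonoidAlgebra

variable [AddCommGroup G] {V : Finset G} {L : Set G} {a b : ℤ} {p : ℕ}

theorem coverCount_prime_mul (hb : IsScaledTiling V L b) (hp : p.Prime) (x : G) :
    (coverCount V L (p * b) x : ZMod p) = #V ^ (p - 1) := by
  have : Fact p.Prime := ⟨hp⟩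
  set S := scaledSum (ZMod p) V b
  calc (coverCount V L (p * b) x : ZMod p)
      = mass (ZMod p) {y | x - y ∈ L} (S ^ p) := by rw [scaledSum_pow_char, mass_scaledSum]
    _ = mass (ZMod p) {y | x - y ∈ L} (S * S ^ (p - 1)) := by
        rw [← pow_succ', Nat.sub_add_cancel hp.one_le]
    _ = #V ^ (p - 1) := by rw [hb.mass_scaledSum_mul, map_pow, augmentation_scaledSum]

theorem prime_mul (hb : IsScaledTiling V L b) (hp : p.Prime) (hpV : ¬p ∣ #V) :
    IsScaledTiling V L (p * b) := by
  have : Fact p.Prime := ⟨hp⟩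
  refine hb.of_forall_one_le fun x => Nat.one_le_iff_ne_zero.mpr fun h0 => ?_
  have hx := hb.coverCount_prime_mul hp x
  have hV : (#V : ZMod p) ≠ 0 := mt (ZMod.natCast_eq_zero_iff _ _).mp hpV
  rw [h0, Nat.cast_zero, ZMod.pow_card_sub_one_eq_one hV] at hx
  exact zero_ne_one hx

theorem natCast_of_coprime (h1 : IsScaledTiling V L 1) (m : ℕ) (hm : m.Coprime #V) :
    IsScaledTiling V L m := by
  induction m using UniqueFactorizationMonoid.induction_on_prime with
  | h₁ => exact h1.zero_of_card_eq_one (Nat.coprime_zero_left _ |>.mp hm)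
  | h₂ u hu => rwa [Nat.isUnit_iff.mp hu, Nat.cast_one]
  | h₃ k q _ hq ih =>
    have hq := Nat.prime_iff.mpr hq
    rw [Nat.cast_mul]
    exact (ih hm.coprime_mul_left).prime_mul hq
      ((Nat.Prime.coprime_iff_not_dvd hq).mp hm.coprime_mul_right)

theorem of_gcd_eq_one (h1 : IsScaledTiling V L 1) (ha : Int.gcd a #V = 1) :
    IsScaledTiling V L a := by
  have hm : a.natAbs.Coprime #V := by simpa [Int.gcd_eq_natAbs] using ha
  rcases Int.natAbs_eq a with h | h <;> rw [h]
  · exact h1.natCast_of_coprime _ hm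
  · exact (h1.natCast_of_coprime _ hm).neg

end IsScaledTiling

/-- Blowout: if `L` tiles `ℤ^n` by translates of `V` and `gcd(a, |V|) = 1`, then `L` also
tiles `ℤ^n` by translates of `a·V`: every `x` is uniquely `x = a·v + l`, `v ∈ V`,
`l ∈ L`. -/
theorem blowout_tiling {n : ℕ} (V : Finset (Fin n → ℤ)) (L : Set (Fin n → ℤ))
    (hL : IsTiling (V : Set (Fin n → ℤ)) L) (a : ℤ) (ha : Int.gcd a (V.card : ℤ) = 1) :
    ∀ x : Fin n → ℤ, ∃! p : (Fin n → ℤ) × (Fin n → ℤ),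
      p.1 ∈ (V : Set (Fin n → ℤ)) ∧ p.2 ∈ L ∧ x = a • p.1 + p.2 := by
  have h1 : IsScaledTiling V L 1 := isScaledTiling_iff.mpr (by simp only [one_smul]; exact hL)
  exact isScaledTiling_iff.mp (h1.of_gcd_eq_one ha)
end

section
/- Let L ⊆ ℤ^n be a tiling of ℤ^n by translates of a finite set V ⊆ ℤ^n, and let a be an integer relatively prime to |V|. Then for every l ∈ L and every pair of distinct elements v, w ∈ V, the point l + a·(v − w) does not belong to L. -/
/-!
Write `k = |a|`. It suffices that the dilate `k • V` still tiles with the same `L`: then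
`k • v + l = k • w + (l + k • (v - w))` are two representations of one point. A dilation by a
product is a composition of dilations, so only a prime `p ∤ |V|` matters. In `𝔽_p[G]` Frobenius
gives `(∑_{v ∈ V} [v]) ^ p = ∑_{v ∈ V} [p • v]`; letting both sides act by convolution on the
indicator of `L` shows `#{v ∈ V | x - p • v ∈ L} ≡ |V| ^ (p - 1) ≢ 0 (mod p)`, so the translates
of `L` by `p • V` cover. Since the translates by `V` are pairwise disjoint, a double count shows
that at most `|V|` translates of `L` that cover must tile.
-/

open Finset

section Translation

variable {G R : Type*} [AddCommGroup G] [CommRing R]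

noncomputable def translateHom : Multiplicative G →* Module.End R (G → R) where
  toFun v := LinearMap.funLeft R R (· - v.toAdd)
  map_one' := by ext; simp
  map_mul' v w := by ext f x; simp [LinearMap.funLeft, sub_sub]

theorem translateHom_apply (v : Multiplicative G) (f : G → R) (x : G) :
    translateHom v f x = f (x - v.toAdd) := rfl

end Translation

section Frobenius

variable {G : Type*} [AddCommGroup G] {V : Finset G} {L : Set G}

open scoped Classical in
theorem card_filter_sub_nsmul_mem_eq_pow {p : ℕ} [Fact p.Prime]
    (hV : ∀ x, #{v ∈ V | x - v ∈ L} = 1) (x : G) :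
    (#{v ∈ V | x - p • v ∈ L} : ZMod p) = (#V : ZMod p) ^ (p - 1) := by
  have : CharP (AddMonoidAlgebra (ZMod p) G) p := (Algebra.charP_iff (ZMod p) _ p).1 inferInstance
  let T := AddMonoidAlgebra.lift (ZMod p) (Module.End (ZMod p) (G → ZMod p)) G translateHom
  let u : AddMonoidAlgebra (ZMod p) G := ∑ v ∈ V, AddMonoidAlgebra.single v 1
  let χ : G → ZMod p := L.indicator 1
  have hT : ∀ (g : G → G) f y,
      T (∑ v ∈ V, AddMonoidAlgebra.single (g v) 1) f y = ∑ v ∈ V, f (y - g v) := by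
    intro g f y
    simp only [T, map_sum, AddMonoidAlgebra.lift_single, one_smul, LinearMap.coe_sum,
      Finset.sum_apply, translateHom_apply, toAdd_ofAdd]
  have hTu : ∀ f y, T u f y = ∑ v ∈ V, f (y - v) := hT id
  have hχ : T u χ = fun _ => 1 := by
    ext y
    rw [hTu]
    simp [χ, Set.indicator_apply, sum_boole, hV]
  have hconst : ∀ c : ZMod p, T u (fun _ => c) = fun _ => #V * c := by
    intro c; ext y; rw [hTu]; simp
  have hpow : ∀ k, (T u ^ (k + 1)) χ = fun _ => (#V : ZMod p) ^ k := by
    intro k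
    induction k with
    | zero => simpa using hχ
    | succ k ih => rw [pow_succ', Module.End.mul_apply, ih, hconst, pow_succ']
  have hfrob : u ^ p = ∑ v ∈ V, AddMonoidAlgebra.single (p • v) 1 := by
    simp [u, sum_pow_char, AddMonoidAlgebra.single_pow]
  have hx := congrFun (hpow (p - 1)) x
  rw [Nat.sub_add_cancel (Fact.out : p.Prime).one_le, ← map_pow, hfrob, hT] at hx
  simpa [χ, Set.indicator_apply, sum_boole] using hx

end Frobenius

variable {n : ℕ} {V W : Finset (Fin n → ℤ)} {L : Set (Fin n → ℤ)}

open scoped Classical in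
theorem isTiling_iff_card_filter_eq_one :
    IsTiling (V : Set (Fin n → ℤ)) L ↔ ∀ x, #{v ∈ V | x - v ∈ L} = 1 := by
  refine forall_congr' fun x => ?_
  rw [card_eq_one_iff_existsUnique]
  constructor
  · rintro ⟨⟨v, l⟩, ⟨hv, hl, rfl⟩, huniq⟩
    refine ⟨v, by simpa using ⟨hv, hl⟩, fun w hw => ?_⟩
    simp only [mem_filter] at hw
    exact congrArg Prod.fst (huniq (w, v + l - w) ⟨hw.1, hw.2, (add_sub_cancel w _).symm⟩)
  · rintro ⟨v, hv, huniq⟩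
    rw [mem_filter] at hv
    refine ⟨(v, x - v), ⟨hv.1, hv.2, (add_sub_cancel v x).symm⟩, ?_⟩
    rintro ⟨w, l⟩ ⟨hw, hl, rfl⟩
    obtain rfl : w = v := huniq w (by simpa using ⟨hw, hl⟩)
    simp

namespace IsTiling

theorem eq_of_add_sub_mem (hL : IsTiling (V : Set (Fin n → ℤ)) L) {v w l : Fin n → ℤ}
    (hv : v ∈ V) (hw : w ∈ V) (hl : l ∈ L) (hvw : l + (v - w) ∈ L) : v = w := by
  obtain ⟨_, -, huniq⟩ := hL (v + l)
  exact congrArg Prod.fst <|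
    (huniq (v, l) ⟨hv, hl, rfl⟩).trans (huniq (w, l + (v - w)) ⟨hw, hvw, by dsimp only; abel⟩).symm

open scoped Classical in
theorem card_filter_add_mem_le_one (hL : IsTiling (V : Set (Fin n → ℤ)) L) (y : Fin n → ℤ) :
    #{v ∈ V | y + v ∈ L} ≤ 1 := by
  refine card_le_one.2 fun v hv w hw => ?_
  rw [mem_filter] at hv hw
  exact hL.eq_of_add_sub_mem hv.1 hw.1 hw.2 (by rw [add_add_sub_cancel]; exact hv.2)

open scoped Classical in
theorem of_card_le_of_forall_exists (hL : IsTiling (V : Set (Fin n → ℤ)) L)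
    (hW : #W ≤ #V) (hcov : ∀ x, ∃ w ∈ W, x - w ∈ L) : IsTiling (W : Set (Fin n → ℤ)) L := by
  rw [isTiling_iff_card_filter_eq_one]
  intro x
  obtain ⟨⟨t₀, _⟩, ⟨ht₀, -⟩, -⟩ := hL 0
  set f : (Fin n → ℤ) → ℕ := fun t => #{w ∈ W | x - t₀ + t - w ∈ L}
  have hf : ∀ t ∈ V, 1 ≤ f t := fun t _ =>
    let ⟨w, hw, hwL⟩ := hcov (x - t₀ + t)
    card_pos.2 ⟨w, mem_filter.2 ⟨hw, hwL⟩⟩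
  have hsum : ∑ t ∈ V, f t ≤ ∑ _t ∈ V, 1 :=
    calc ∑ t ∈ V, f t = ∑ w ∈ W, #{t ∈ V | x - t₀ - w + t ∈ L} := by
          simp only [f, card_filter]
          rw [sum_comm]
          simp only [sub_add_eq_add_sub]
      _ ≤ ∑ _w ∈ W, 1 := sum_le_sum fun w _ => hL.card_filter_add_mem_le_one _
      _ ≤ ∑ _t ∈ V, 1 := by simpa using hW
  have hx := ((sum_eq_sum_iff_of_le hf).1 (le_antisymm (sum_le_sum hf) hsum) t₀ ht₀).symm
  simpa [f] using hx

open scoped Classical in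
theorem image_nsmul_of_prime (hL : IsTiling (V : Set (Fin n → ℤ)) L) {p : ℕ} (hp : p.Prime)
    (hpV : ¬p ∣ #V) : IsTiling (V.image (p • ·) : Set (Fin n → ℤ)) L := by
  have : Fact p.Prime := ⟨hp⟩
  refine hL.of_card_le_of_forall_exists card_image_le fun x => ?_
  have hcount := card_filter_sub_nsmul_mem_eq_pow (p := p) (isTiling_iff_card_filter_eq_one.1 hL) x
  have hne : #{v ∈ V | x - p • v ∈ L} ≠ 0 := fun h0 => by
    rw [h0, Nat.cast_zero, eq_comm] at hcount
    exact hpV ((ZMod.natCast_eq_zero_iff _ _).1 (eq_zero_of_pow_eq_zero hcount))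
  obtain ⟨v, hv⟩ := card_ne_zero.1 hne
  rw [mem_filter] at hv
  exact ⟨p • v, mem_image_of_mem _ hv.1, hv.2⟩

theorem image_nsmul (hL : IsTiling (V : Set (Fin n → ℤ)) L) {k : ℕ} (hk : k.Coprime #V)
    (hk0 : k ≠ 0) : IsTiling (V.image (k • ·) : Set (Fin n → ℤ)) L := by
  induction k using Nat.recOnMul generalizing V with
  | zero => exact absurd rfl hk0
  | one => simpa using hL
  | prime p hp => exact hL.image_nsmul_of_prime hp ((Nat.Prime.coprime_iff_not_dvd hp).1 hk)
  | mul a b iha ihb =>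
    have hb := ihb hL (Nat.Coprime.coprime_mul_left hk) (right_ne_zero_of_mul hk0)
    have hcard : #(V.image (b • ·)) = #V :=
      card_image_of_injective _ (nsmul_right_injective (right_ne_zero_of_mul hk0))
    have hab := iha hb (hcard ▸ Nat.Coprime.coprime_mul_right hk) (left_ne_zero_of_mul hk0)
    simpa only [image_image, Function.comp_def, mul_smul] using hab

theorem eq_of_add_nsmul_sub_mem (hL : IsTiling (V : Set (Fin n → ℤ)) L) {k : ℕ}
    (hk : k.Coprime #V) {v w l : Fin n → ℤ} (hv : v ∈ V) (hw : w ∈ V) (hl : l ∈ L)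
    (h : l + k • (v - w) ∈ L) : v = w := by
  obtain rfl | hk0 := eq_or_ne k 0
  · exact card_le_one.1 (Nat.coprime_zero_left _ |>.1 hk).le v hv w hw
  refine nsmul_right_injective hk0 <|
    (hL.image_nsmul hk hk0).eq_of_add_sub_mem (mem_image_of_mem _ hv) (mem_image_of_mem _ hw) hl ?_
  rwa [← nsmul_sub]

end IsTiling

/-- If `L` tiles `ℤ^n` by translates of `V` and `gcd(a, |V|) = 1`, then for every `l ∈ L`
and distinct `v, w ∈ V`, the point `l + a·(v − w)` is not in `L`. -/
theorem not_mem_of_coprime_shift {n : ℕ} (V : Finset (Fin n → ℤ)) (L : Set (Fin n → ℤ))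
    (hL : IsTiling (V : Set (Fin n → ℤ)) L) (a : ℤ) (ha : Int.gcd a (V.card : ℤ) = 1) :
    ∀ l ∈ L, ∀ v ∈ V, ∀ w ∈ V, v ≠ w → l + a • (v - w) ∉ L := by
  intro l hl v hv w hw hvw hmem
  have hk : a.natAbs.Coprime #V := by rwa [Int.gcd_eq_natAbs, Int.natAbs_natCast] at ha
  rcases Int.natAbs_eq a with h | h
  · rw [h, natCast_zsmul] at hmem
    exact hvw (hL.eq_of_add_nsmul_sub_mem hk hv hw hl hmem)
  · rw [h, neg_smul, ← smul_neg, neg_sub, natCast_zsmul] at hmem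
    exact hvw (hL.eq_of_add_nsmul_sub_mem hk hw hv hl hmem).symm
end

section
/- Let V ⊆ ℤ^n be a finite set whose cardinality |V| = p is a prime number, and let L ⊆ ℤ^n be a tiling of ℤ^n by translates of V. Then for any v, w ∈ V, the vector p·(v − w) is a period of the tiling, i.e., L + p·(v − w) = L. -/
open Finset AddMonoidAlgebra

theorem Finset.forall_or_forall_not_of_card_dvd_card_filter {α : Type*} {s : Finset α}
    {P : α → Prop} [DecidablePred P] (hdvd : #s ∣ #{a ∈ s | P a}) :
    (∀ a ∈ s, P a) ∨ ∀ a ∈ s, ¬P a := by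
  rcases Nat.eq_zero_or_pos #{a ∈ s | P a} with hzero | hpos
  · exact .inr (filter_eq_empty_iff.mp (card_eq_zero.mp hzero))
  · exact .inl (filter_eq_self.mp
      (eq_of_subset_of_card_le (filter_subset P s) (Nat.le_of_dvd hpos hdvd)))

namespace AddMonoidAlgebra

variable {R G : Type*} [CommRing R] [AddCommGroup G]

variable (R G) in
def translationHom : Multiplicative G →* Module.End R (G → R) where
  toFun g := LinearMap.funLeft R R (· - g.toAdd)
  map_one' := by ext; simp [LinearMap.funLeft_apply]
  map_mul' g h := by
    ext f x
    simp [LinearMap.funLeft_apply, sub_sub]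

variable (R G) in
/-- `convolutionAction R G a f x = ∑ g, a g * f (x - g)`. -/
noncomputable def convolutionAction : R[G] →ₐ[R] Module.End R (G → R) :=
  lift R (Module.End R (G → R)) G (translationHom R G)

theorem convolutionAction_sum_single_apply {ι : Type*} (s : Finset ι) (g : ι → G) (f : G → R)
    (x : G) : convolutionAction R G (∑ i ∈ s, single (g i) 1) f x = ∑ i ∈ s, f (x - g i) := by
  simp [convolutionAction, translationHom, LinearMap.funLeft_apply]

end AddMonoidAlgebra

theorem sum_sub_nsmul_eq_zero_of_sum_sub_eq_const {R G : Type*} [CommRing R] [AddCommGroup G]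
    (p : ℕ) [Fact p.Prime] [CharP R p] {V : Finset G} (hV : (#V : R) = 0) {f : G → R} {c : R}
    (hf : ∀ x, ∑ u ∈ V, f (x - u) = c) (x : G) : ∑ u ∈ V, f (x - p • u) = 0 := by
  have : CharP R[G] p := charP_of_injective_algebraMap' R p
  set S := convolutionAction R G (∑ u ∈ V, single u 1)
  have hS : ∀ g y, S g y = ∑ u ∈ V, g (y - u) := convolutionAction_sum_single_apply V id
  have hSS : S (S f) = 0 := by
    ext y
    simp only [hS, hf, sum_const, nsmul_eq_mul, hV, zero_mul, Pi.zero_apply]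
  have hSp : S ^ p = convolutionAction R G (∑ u ∈ V, single (p • u) 1) := by
    rw [← map_pow, sum_pow_char]
    simp only [single_pow, one_pow]
  obtain ⟨k, rfl⟩ : ∃ k, p = k + 2 := ⟨p - 2, by have := (Fact.out : p.Prime).two_le; omega⟩
  rw [← convolutionAction_sum_single_apply, ← hSp, pow_succ, pow_succ, Module.End.mul_apply,
    Module.End.mul_apply, hSS, map_zero, Pi.zero_apply]

namespace IsTiling

variable {n : ℕ}

theorem existsUnique_sub_mem {V L : Set (Fin n → ℤ)} (hL : IsTiling V L) (x : Fin n → ℤ) :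
    ∃! u, u ∈ V ∧ x - u ∈ L := by
  obtain ⟨⟨u, l⟩, ⟨hu, hl, rfl⟩, huniq⟩ := hL x
  refine ⟨u, ⟨hu, by simpa using hl⟩, fun u' ⟨hu', hl'⟩ => ?_⟩
  exact congrArg Prod.fst (huniq (u', u + l - u') ⟨hu', hl', (add_sub_cancel _ _).symm⟩)

theorem sum_indicator_sub {R : Type*} [AddCommMonoidWithOne R] {V : Finset (Fin n → ℤ)}
    {L : Set (Fin n → ℤ)} (hL : IsTiling (V : Set (Fin n → ℤ)) L) (x : Fin n → ℤ) :
    ∑ u ∈ V, L.indicator 1 (x - u) = (1 : R) := by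
  obtain ⟨u, ⟨hu, hxu⟩, huniq⟩ := hL.existsUnique_sub_mem x
  rw [sum_eq_single_of_mem u hu fun u' hu' hne =>
      Set.indicator_of_notMem (fun h => hne (huniq u' ⟨hu', h⟩)) _,
    Set.indicator_of_mem hxu, Pi.one_apply]

theorem sub_nsmul_mem_iff {V : Finset (Fin n → ℤ)} {p : ℕ} (hp : p.Prime) (hcard : #V = p)
    {L : Set (Fin n → ℤ)} (hL : IsTiling (V : Set (Fin n → ℤ)) L) (x : Fin n → ℤ)
    {v w : Fin n → ℤ} (hv : v ∈ V) (hw : w ∈ V) : x - p • v ∈ L ↔ x - p • w ∈ L := by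
  classical
  have : Fact p.Prime := ⟨hp⟩
  have hsum := sum_sub_nsmul_eq_zero_of_sum_sub_eq_const (R := ZMod p) p
    (by rw [hcard, ZMod.natCast_self]) (hL.sum_indicator_sub (R := ZMod p)) x
  simp only [Set.indicator_apply, Pi.one_apply, sum_boole] at hsum
  have hdvd : #V ∣ #{u ∈ V | x - p • u ∈ L} := by
    rw [hcard]; exact (ZMod.natCast_eq_zero_iff _ _).mp hsum
  rcases forall_or_forall_not_of_card_dvd_card_filter hdvd with h | h
  · exact iff_of_true (h v hv) (h w hw)
  · exact iff_of_false (h v hv) (h w hw)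

end IsTiling

/-- If `|V| = p` is prime and `L` tiles `ℤ^n` by translates of `V`, then `p·(v − w)` is a
period of the tiling for all `v, w ∈ V`. -/
theorem prime_tile_period {n : ℕ} (V : Finset (Fin n → ℤ)) (p : ℕ) (hp : p.Prime)
    (hcard : V.card = p) (L : Set (Fin n → ℤ)) (hL : IsTiling (V : Set (Fin n → ℤ)) L)
    (v w : Fin n → ℤ) (hv : v ∈ V) (hw : w ∈ V) :
    ∀ x : Fin n → ℤ, x ∈ L ↔ x + (p : ℤ) • (v - w) ∈ L := by
  intro x
  have h := hL.sub_nsmul_mem_iff hp hcard (x + p • v) hv hw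
  rwa [add_sub_cancel_right, add_sub_assoc, ← smul_sub, ← natCast_zsmul] at h
end

section
/- Let p be a prime and let V = {v_0 = 0, v_1, ..., v_{p−1}} ⊆ ℤ^n be a set of p elements containing 0 such that v_1, ..., v_{p−1} generate ℤ^n as an abelian group. Then there exists a tiling of ℤ^n by translates of V if and only if there exists a group homomorphism φ : ℤ^n → ℤ/pℤ whose restriction to V is a bijection from V onto ℤ/pℤ. -/
open Finset Polynomial Pointwise

/-- `IsTiling`, with the translation `l = z - v` eliminated. -/
def Tiles {G : Type*} [AddGroup G] (V : Finset G) (L : Set G) : Prop :=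
  ∀ z : G, ∃! v, v ∈ V ∧ z - v ∈ L

lemma isTiling_iff_tiles {n : ℕ} (V : Finset (Fin n → ℤ)) (L : Set (Fin n → ℤ)) :
    IsTiling V L ↔ Tiles V L := by
  refine forall_congr' fun z =>
    ⟨fun ⟨⟨v, l⟩, ⟨hv, hl, hz⟩, huniq⟩ => ?_, fun ⟨v, ⟨hv, hl⟩, huniq⟩ => ?_⟩
  · refine ⟨v, ⟨hv, by simpa [hz] using hl⟩, fun w ⟨hw, hwl⟩ => ?_⟩
    exact congrArg Prod.fst (huniq (w, z - w) ⟨hw, hwl, by simp⟩)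
  · refine ⟨(v, z - v), ⟨hv, hl, by simp⟩, fun ⟨w, l⟩ ⟨hw, hl', hz⟩ => ?_⟩
    obtain rfl := huniq w ⟨hw, by simpa [hz] using hl'⟩
    simp [hz]

section GroupAlgebra

open AddMonoidAlgebra

variable {R G : Type*} [CommSemiring R] [AddCommGroup G]

/-- `f ↦ (f ⋆ χ) z = ∑ s, f s * χ (z - s)`. -/
noncomputable def convEval (χ : G → R) (z : G) : R[G] →+ R :=
  (Finsupp.liftAddHom fun s => AddMonoidHom.mulRight (χ (z - s))).comp
    coeffAddEquiv.toAddMonoidHom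

lemma convEval_single (χ : G → R) (z s : G) (c : R) :
    convEval χ z (single s c) = c * χ (z - s) := by
  simp [convEval, coeff_single]

lemma convEval_single_one_mul (χ : G → R) (z s : G) (f : R[G]) :
    convEval χ z (single s 1 * f) = convEval χ (z - s) f := by
  induction f using induction_linear with
  | zero => simp
  | add f g hf hg => rw [mul_add, map_add, map_add, hf, hg]
  | single t c => rw [single_mul_single, one_mul, convEval_single, convEval_single, sub_sub]

lemma convEval_sum_single_one_mul (χ : G → R) (z : G) (V : Finset G) (f : R[G]) :
    convEval χ z ((∑ v ∈ V, single v 1) * f) = ∑ v ∈ V, convEval χ (z - v) f := by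
  simp only [Finset.sum_mul, map_sum, convEval_single_one_mul]

end GroupAlgebra

namespace Tiles

open AddMonoidAlgebra

variable {G : Type*} [AddCommGroup G] {V : Finset G} {L : Set G}

open scoped Classical in
lemma card_filter_sub_mem (hT : Tiles V L) (z : G) : #{v ∈ V | z - v ∈ L} = 1 :=
  let ⟨v, hv, huniq⟩ := hT z
  card_eq_one.mpr ⟨v, eq_singleton_iff_unique_mem.mpr
    ⟨mem_filter.mpr hv, fun w hw => huniq w (mem_filter.mp hw)⟩⟩

lemma convEval_indicator_pow {R : Type*} [CommSemiring R] (hT : Tiles V L) (k : ℕ) (z : G) :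
    convEval (L.indicator 1) z ((∑ v ∈ V, single v (1 : R)) ^ (k + 1)) = (#V : R) ^ k := by
  induction k generalizing z with
  | zero =>
    classical
    rw [zero_add, pow_one, ← mul_one (∑ v ∈ V, _), convEval_sum_single_one_mul]
    simp only [one_def, convEval_single, one_mul, sub_zero, Set.indicator_apply, Pi.one_apply]
    rw [sum_boole, hT.card_filter_sub_mem, Nat.cast_one, pow_zero]
  | succ k ih =>
    rw [pow_succ' _ (k + 1), convEval_sum_single_one_mul]
    simp only [ih]
    rw [sum_const, nsmul_eq_mul, pow_succ']

open scoped Classical in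
lemma prime_dvd_card_filter_sub_nsmul_mem {p : ℕ} [hp : Fact p.Prime] (hT : Tiles V L)
    (hcard : #V = p) (y : G) : p ∣ #{v ∈ V | y - p • v ∈ L} := by
  have : CharP (ZMod p)[G] p := charP_of_injective_algebraMap' (ZMod p) p
  have : ExpChar (ZMod p)[G] p := ExpChar.prime hp.out
  have hfrob : (∑ v ∈ V, single v (1 : ZMod p)) ^ p = ∑ v ∈ V, single (p • v) 1 := by
    simp only [sum_pow_char, single_pow, one_pow]
  have hcount := hT.convEval_indicator_pow (R := ZMod p) (p - 1) y
  rw [Nat.sub_add_cancel hp.out.one_le, hfrob, map_sum, hcard, ZMod.natCast_self,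
    zero_pow (Nat.sub_ne_zero_of_lt hp.out.one_lt)] at hcount
  simp only [convEval_single, one_mul, Set.indicator_apply, Pi.one_apply, sum_boole] at hcount
  exact (ZMod.natCast_eq_zero_iff _ p).mp hcount

open scoped Classical in
lemma forall_sub_nsmul_mem {p : ℕ} [Fact p.Prime] (hT : Tiles V L) (hcard : #V = p)
    {y v₀ : G} (hv₀ : v₀ ∈ V) (hy : y - p • v₀ ∈ L) : ∀ v ∈ V, y - p • v ∈ L := by
  have hpos : 0 < #{v ∈ V | y - p • v ∈ L} := card_pos.mpr ⟨v₀, mem_filter.mpr ⟨hv₀, hy⟩⟩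
  have hdvd := hT.prime_dvd_card_filter_sub_nsmul_mem hcard y
  rw [← card_filter_eq_iff]
  exact le_antisymm (card_filter_le _ _) (hcard.symm ▸ Nat.le_of_dvd hpos hdvd)

lemma closure_le_comap_stabilizer {p : ℕ} [Fact p.Prime] (hT : Tiles V L) (hcard : #V = p)
    (h0 : 0 ∈ V) :
    AddSubgroup.closure (V : Set G) ≤ (AddAction.stabilizer G L).comap (nsmulAddMonoidHom p) := by
  rw [AddSubgroup.closure_le]
  intro v hv
  rw [SetLike.mem_coe, AddSubgroup.mem_comap, AddAction.mem_stabilizer_set]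
  intro x
  rw [nsmulAddMonoidHom_apply, vadd_eq_add, add_comm]
  constructor
  · intro hx
    simpa using hT.forall_sub_nsmul_mem hcard h0 (y := x + p • v) (by simpa using hx) v hv
  · intro hx
    simpa using hT.forall_sub_nsmul_mem hcard hv (y := x + p • v) (by simpa using hx) 0 h0

variable {H : Type*} [AddCommGroup H] {π : G →+ H}

lemma injOn (hT : Tiles V L) (hker : π.ker ≤ AddAction.stabilizer G L) : Set.InjOn π V := by
  intro v₁ hv₁ v₂ hv₂ hπ
  obtain ⟨v₀, ⟨-, hl⟩, -⟩ := hT 0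
  have hshift : v₁ - v₂ ∈ AddAction.stabilizer G L := hker (by simp [hπ])
  have hl' := (AddAction.mem_stabilizer_set.mp hshift (0 - v₀)).mpr hl
  obtain ⟨v, -, huniq⟩ := hT (v₁ + (0 - v₀))
  have h₂ : v₁ + (0 - v₀) - v₂ ∈ L := by
    convert hl' using 1
    rw [vadd_eq_add]
    abel
  rw [huniq v₁ ⟨hv₁, by simpa using hl⟩, huniq v₂ ⟨hv₂, h₂⟩]

lemma image [DecidableEq H] (hT : Tiles V L) (hπ : Function.Surjective π)
    (hker : π.ker ≤ AddAction.stabilizer G L) : Tiles (V.image π) (π '' L) := by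
  intro z
  obtain ⟨x, rfl⟩ := hπ z
  obtain ⟨v, ⟨hv, hxv⟩, huniq⟩ := hT x
  refine ⟨π v, ⟨mem_image_of_mem π hv, x - v, hxv, map_sub π x v⟩, ?_⟩
  rintro _ ⟨hw', l, hl, hπl⟩
  obtain ⟨w, hw, rfl⟩ := mem_image.mp hw'
  have hk : x - w - l ∈ AddAction.stabilizer G L := hker (by simp [hπl])
  have := (AddAction.mem_stabilizer_set.mp hk l).mpr hl
  rw [vadd_eq_add, sub_add_cancel] at this
  rw [huniq w ⟨hw, this⟩]

end Tiles

lemma tiles_ker_of_bijOn {G H : Type*} [AddCommGroup G] [AddCommGroup H] {V : Finset G}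
    {φ : G →+ H} (hφ : Set.BijOn φ V Set.univ) : Tiles V φ.ker := by
  intro z
  obtain ⟨v, hv, hφv⟩ := hφ.surjOn (Set.mem_univ (φ z))
  refine ⟨v, ⟨hv, by simp [hφv]⟩, ?_⟩
  rintro w ⟨hw, hzw⟩
  exact hφ.injOn hw hv (by rw [hφv]; exact (by simpa [sub_eq_zero] using hzw : φ z = φ w).symm)

section Fourier

variable {G : Type*} [AddCommGroup G] [Fintype G] {A : Finset G} {B : Set G}

lemma Tiles.sum_sum_add {M : Type*} [AddCommMonoid M] [DecidablePred (· ∈ B)]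
    (hT : Tiles A B) (f : G → M) : ∑ a ∈ A, ∑ b ∈ B.toFinset, f (a + b) = ∑ g, f g := by
  rw [← sum_product']
  refine sum_bij (fun q _ => q.1 + q.2) (fun _ _ => mem_univ _) ?_ ?_ (fun _ _ => rfl)
  · rintro ⟨a, b⟩ hab ⟨a', b'⟩ hab' heq
    simp only [mem_product, Set.mem_toFinset] at hab hab' heq
    obtain ⟨_, -, huniq⟩ := hT (a + b)
    obtain rfl : a = a' :=
      (huniq a ⟨hab.1, by simpa using hab.2⟩).trans
        (huniq a' ⟨hab'.1, by simpa [heq] using hab'.2⟩).symm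
    simpa using heq
  · intro g _
    obtain ⟨a, ⟨ha, hga⟩, -⟩ := hT g
    exact ⟨(a, g - a), mem_product.mpr ⟨ha, Set.mem_toFinset.mpr hga⟩, add_sub_cancel a g⟩

lemma Tiles.exists_addChar_sum_eq_zero (hT : Tiles A B) (hA : 1 < #A) :
    ∃ ψ : AddChar G ℂ, ∑ a ∈ A, ψ a = 0 := by
  classical
  by_contra! hne
  have hB : ∀ ψ : AddChar G ℂ, ψ ≠ 0 → ∑ b ∈ B.toFinset, ψ b = 0 := by
    intro ψ hψ
    have hprod : (∑ a ∈ A, ψ a) * ∑ b ∈ B.toFinset, ψ b = 0 := by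
      rw [sum_mul_sum, ← AddChar.sum_eq_zero_iff_ne_zero.mpr hψ, ← hT.sum_sum_add]
      simp only [AddChar.map_add_eq_mul]
    exact (mul_eq_zero.mp hprod).resolve_left (hne ψ)
  -- so `1_B` has no nontrivial Fourier coefficient: it is constant, and `B = G` forces `#A = 1`
  have hBuniv : ∀ g, g ∈ B := by
    intro g
    have hinv : ∑ ψ : AddChar G ℂ, ∑ b ∈ B.toFinset, ψ (b - g)
        = if g ∈ B then (Fintype.card G : ℂ) else 0 := by
      rw [sum_comm]
      simp only [AddChar.sum_apply_eq_ite, sub_eq_zero, sum_ite_eq', Set.mem_toFinset]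
    have hcard : ∑ ψ : AddChar G ℂ, ∑ b ∈ B.toFinset, ψ (b - g) = #B.toFinset := by
      rw [Fintype.sum_eq_single 0]
      · simp
      · intro ψ hψ
        simp only [sub_eq_add_neg, AddChar.map_add_eq_mul, ← sum_mul, hB ψ hψ, zero_mul]
    obtain ⟨v, ⟨-, hv⟩, -⟩ := hT 0
    have hBne : (#B.toFinset : ℂ) ≠ 0 :=
      Nat.cast_ne_zero.mpr (card_ne_zero.mpr ⟨_, Set.mem_toFinset.mpr hv⟩)
    by_contra hg
    rw [hcard, if_neg hg] at hinv
    exact hBne hinv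
  have hA1 := hT.card_filter_sub_mem 0
  rw [filter_true_of_mem fun a _ => hBuniv _] at hA1
  omega

end Fourier

section RootsOfUnity

lemma ZMod.isPrimitiveRoot_stdAddChar_one (N : ℕ) [NeZero N] :
    IsPrimitiveRoot (ZMod.stdAddChar (1 : ZMod N)) N := by
  have key : ∀ l : ℕ, ZMod.stdAddChar (1 : ZMod N) ^ l = 1 ↔ N ∣ l := by
    intro l
    rw [← AddChar.map_nsmul_eq_pow, nsmul_one, ← AddChar.map_zero_eq_one (ZMod.stdAddChar (N := N)),
      ZMod.injective_stdAddChar.eq_iff, ZMod.natCast_eq_zero_iff]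
  exact ⟨(key N).mpr dvd_rfl, fun l => (key l).mp⟩

/-- The only `ℚ`-linear relation among `1, ζ, …, ζ^(p-1)` is their sum, because the minimal
polynomial of `ζ` is `1 + X + ⋯ + X^(p-1)`. -/
lemma IsPrimitiveRoot.eq_of_sum_mul_pow_eq_zero {K : Type*} [Field K] [CharZero K] {p : ℕ}
    [hp : Fact p.Prime] {ζ : K} (hζ : IsPrimitiveRoot ζ p) {m : ZMod p → ℚ}
    (h : ∑ j, (m j : K) * ζ ^ j.val = 0) (j k : ZMod p) : m j = m k := by
  set P : ℚ[X] := ∑ j, C (m j) * X ^ j.val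
  have hcoeff : ∀ j : ZMod p, P.coeff j.val = m j := by
    intro j
    simp only [P, finsetSum_coeff, coeff_C_mul_X_pow, (ZMod.val_injective p).eq_iff, sum_ite_eq,
      mem_univ, if_true]
  have hdvd : cyclotomic p ℚ ∣ P := by
    rw [cyclotomic_eq_minpoly_rat hζ hp.out.pos]
    refine minpoly.dvd ℚ ζ ?_
    simpa [P, map_sum] using h
  have hdeg : P.natDegree ≤ (cyclotomic p ℚ).natDegree := by
    rw [natDegree_cyclotomic, Nat.totient_prime hp.out]
    refine natDegree_sum_le_of_forall_le _ _ fun i _ => (natDegree_C_mul_X_pow_le _ _).trans ?_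
    have := ZMod.val_lt i
    omega
  have hP := eq_leadingCoeff_mul_of_monic_of_dvd_of_natDegree_le (cyclotomic.monic p ℚ) hdvd hdeg
  have hcyc : ∀ i : ZMod p, (cyclotomic p ℚ).coeff i.val = 1 := by
    intro i
    simp [cyclotomic_prime, coeff_X_pow, ZMod.val_lt]
  rw [← hcoeff, ← hcoeff, hP, coeff_C_mul, coeff_C_mul, hcyc, hcyc]

lemma ZMod.bijOn_of_sum_stdAddChar_eq_zero {p : ℕ} [hp : Fact p.Prime] {ι : Type*}
    {s : Finset ι} (hs : #s = p) {f : ι → ZMod p} (h : ∑ i ∈ s, ZMod.stdAddChar (f i) = 0) :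
    Set.BijOn f s Set.univ := by
  classical
  set m : ZMod p → ℕ := fun j => #{i ∈ s | f i = j}
  have hsum : ∑ j, m j = p := by
    rw [← card_eq_sum_card_fiberwise (fun i _ => mem_univ (f i))]
    exact hs
  have hzero : ∑ j, ((m j : ℚ) : ℂ) * ZMod.stdAddChar (1 : ZMod p) ^ j.val = 0 := by
    rw [← h, ← sum_fiberwise_of_maps_to (fun i _ => mem_univ (f i))]
    refine sum_congr rfl fun j _ => ?_
    rw [← AddChar.map_nsmul_eq_pow, nsmul_one, ZMod.natCast_zmod_val,
      sum_congr rfl fun i hi => by rw [(mem_filter.mp hi).2], sum_const, nsmul_eq_mul]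
    push_cast
    rfl
  have hm : ∀ j, m j = 1 := by
    intro j
    have hconst : ∀ k, m k = m j := fun k => by
      exact_mod_cast (ZMod.isPrimitiveRoot_stdAddChar_one p).eq_of_sum_mul_pow_eq_zero hzero k j
    rw [sum_congr rfl fun k _ => hconst k, sum_const, card_univ, ZMod.card, smul_eq_mul] at hsum
    exact (Nat.mul_eq_left hp.out.ne_zero).mp hsum
  refine ⟨fun _ _ => Set.mem_univ _, fun i hi i' hi' hii' => ?_, fun j _ => ?_⟩
  · exact card_le_one.mp (hm (f i)).le i (mem_filter.mpr ⟨hi, rfl⟩) i'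
      (mem_filter.mpr ⟨hi', hii'.symm⟩)
  · obtain ⟨i, hi⟩ := card_pos.mp (by rw [hm j]; exact one_pos : 0 < m j)
    exact ⟨i, (mem_filter.mp hi).1, (mem_filter.mp hi).2⟩

end RootsOfUnity

lemma Int.ker_castAddHom_compLeft_le (ι : Type*) (p : ℕ) :
    ((Int.castAddHom (ZMod p)).compLeft ι).ker ≤ (nsmulAddMonoidHom p).range := by
  intro x hx
  have hdvd : ∀ i, (p : ℤ) ∣ x i := fun i =>
    (ZMod.intCast_zmod_eq_zero_iff_dvd _ p).mp (congrFun hx i)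
  exact ⟨fun i => x i / p, funext fun i => by simp [Int.mul_ediv_cancel' (hdvd i)]⟩

section Lattice

variable {ι : Type*} [Fintype ι]

noncomputable def dotChar {N : ℕ} [NeZero N] (w : ι → ZMod N) : AddChar (ι → ZMod N) ℂ :=
  ZMod.stdAddChar.compAddMonoidHom (AddMonoidHom.mk' (w ⬝ᵥ ·) (dotProduct_add w))

lemma dotChar_surjective {N : ℕ} [NeZero N] :
    Function.Surjective (dotChar : (ι → ZMod N) → AddChar _ ℂ) := by
  classical
  have hinj : Function.Injective (dotChar : (ι → ZMod N) → AddChar _ ℂ) := by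
    intro w w' h
    funext i
    simpa [dotChar, dotProduct_single, ZMod.injective_stdAddChar.eq_iff] using
      DFunLike.congr_fun h (Pi.single i 1)
  exact ((Fintype.bijective_iff_injective_and_card _).mpr ⟨hinj, AddChar.card_eq.symm⟩).2

lemma Tiles.exists_addMonoidHom_bijOn {p : ℕ} [hp : Fact p.Prime] {V : Finset (ι → ℤ)}
    {L : Set (ι → ℤ)} (hT : Tiles V L) (hcard : #V = p) (h0 : 0 ∈ V)
    (hgen : AddSubgroup.closure (V : Set (ι → ℤ)) = ⊤) :
    ∃ φ : (ι → ℤ) →+ ZMod p, Set.BijOn φ V Set.univ := by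
  classical
  set π := (Int.castAddHom (ZMod p)).compLeft ι
  have hπ : Function.Surjective π := ZMod.intCast_surjective.comp_left
  have hker : π.ker ≤ AddAction.stabilizer (ι → ℤ) L := by
    intro x hx
    obtain ⟨t, rfl⟩ := Int.ker_castAddHom_compLeft_le ι p hx
    exact hT.closure_le_comap_stabilizer hcard h0 (hgen ▸ AddSubgroup.mem_top t)
  have hcard' : 1 < #(V.image π) := by
    rw [card_image_of_injOn (hT.injOn hker), hcard]
    exact hp.out.one_lt
  obtain ⟨ψ, hψ⟩ := (hT.image hπ hker).exists_addChar_sum_eq_zero hcard'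
  obtain ⟨w, rfl⟩ := dotChar_surjective ψ
  rw [sum_image (hT.injOn hker)] at hψ
  exact ⟨(AddMonoidHom.mk' (w ⬝ᵥ ·) (dotProduct_add w)).comp π,
    ZMod.bijOn_of_sum_stdAddChar_eq_zero hcard hψ⟩

end Lattice

/-- For a prime-size tile `V = {0, v_1, …, v_{p−1}} ⊆ ℤ^n` whose nonzero elements generate
`ℤ^n` as an abelian group, `V` tiles `ℤ^n` by translations if and only if there is a group
homomorphism `φ : ℤ^n → ℤ/pℤ` restricting to a bijection `V → ℤ/pℤ`. -/
theorem prime_tile_iff_lattice {n : ℕ} (p : ℕ) (hp : p.Prime) (V : Finset (Fin n → ℤ))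
    (h0 : (0 : Fin n → ℤ) ∈ V) (hcard : V.card = p)
    (hgen : AddSubgroup.closure ((V.erase 0 : Finset (Fin n → ℤ)) : Set (Fin n → ℤ)) = ⊤) :
    (∃ L : Set (Fin n → ℤ), IsTiling (V : Set (Fin n → ℤ)) L) ↔
      ∃ φ : (Fin n → ℤ) →+ ZMod p,
        Set.BijOn φ (V : Set (Fin n → ℤ)) Set.univ := by
  have : Fact p.Prime := ⟨hp⟩
  have hgenV : AddSubgroup.closure (V : Set (Fin n → ℤ)) = ⊤ :=
    top_unique (hgen ▸ AddSubgroup.closure_mono (coe_subset.mpr (erase_subset 0 V)))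
  simp only [isTiling_iff_tiles]
  constructor
  · rintro ⟨L, hT⟩
    exact hT.exists_addMonoidHom_bijOn hcard h0 hgenV
  · rintro ⟨φ, hφ⟩
    exact ⟨φ.ker, tiles_ker_of_bijOn hφ⟩
end
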